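/- arXiv:0901.1615 — 4 statements merged into one kernel-verified Lean document; each statement's English description precedes it below -/
import Mathlib

section
/- Let X be a complex Hilbert space, let 0 < ψ < φ < π, and let F : {z ∈ ℂ : -φ < arg z < -ψ, z ≠ 0} → X be continuous on the closure minus the origin and analytic in the interior. Suppose there is a constant M such that ‖F(a e^{-iθ})‖ ≤ M a^{-1/2} for all a > 0 and θ ∈ [ψ, φ], and that a^{-1/2}‖F(a e^{-iθ})‖ → 0 uniformly in θ as a → 0 and as a → +∞. Then for every λ in e^{iψ}ℂ⁻ ∩ e^{iφ}ℂ⁻, the contour integrals along the two rays agree: ∫_{e^{-iψ}ℝ⁺} e^{-iλz} F(z) dz = ∫_{e^{-iφ}ℝ⁺} e^{-iλz} F(z) dz, both integrals being absolutely convergent in X. -/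
open Complex MeasureTheory Set Filter
open scoped Topology Real

lemma aux_exp (x θ : ℝ) : Complex.exp (↑x + ↑(-θ) * Complex.I)
    = ↑(Real.exp x) * Complex.exp (-Complex.I * θ) := by
  rw [Complex.exp_add, Complex.ofReal_exp]
  congr 1
  push_cast
  ring

lemma re_aux (t : ℝ) (u v : ℂ) : (-Complex.I * u * (↑t * v)).re = t * (v * u).im := by
  simp [Complex.mul_re, Complex.mul_im]
  ring

lemma sin_interp (ψ θ φ : ℝ) :
    (Real.sin (φ - ψ) : ℂ) * Complex.exp (-Complex.I * θ)
      = (Real.sin (φ - θ) : ℂ) * Complex.exp (-Complex.I * ψ)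
        + (Real.sin (θ - ψ) : ℂ) * Complex.exp (-Complex.I * φ) := by
  apply Complex.ext <;>
    simp [Complex.ext_iff, Complex.exp_re, Complex.exp_im, Complex.mul_re, Complex.mul_im,
      Real.sin_sub, Real.cos_sub, Complex.sin_ofReal_re, Complex.cos_ofReal_re] <;> ring

lemma my_ofReal_mul_im (r : ℝ) (z : ℂ) : ((r : ℂ) * z).im = r * z.im := by
  simp [Complex.mul_im]

lemma im_neg_on_Icc {ψ φ : ℝ} (hψ : 0 < ψ) (hψφ : ψ < φ) (hφ : φ < Real.pi) {l : ℂ}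
    (h1 : (Complex.exp (-Complex.I * ψ) * l).im < 0)
    (h2 : (Complex.exp (-Complex.I * φ) * l).im < 0)
    {θ : ℝ} (hθ : θ ∈ Set.Icc ψ φ) : (Complex.exp (-Complex.I * θ) * l).im < 0 := by
  obtain ⟨hθ1, hθ2⟩ := hθ
  have key : Real.sin (φ - ψ) * (Complex.exp (-Complex.I * θ) * l).im
      = Real.sin (φ - θ) * (Complex.exp (-Complex.I * ψ) * l).im
        + Real.sin (θ - ψ) * (Complex.exp (-Complex.I * φ) * l).im := by
    have h := congrArg (fun z => (z * l).im) (sin_interp ψ θ φ)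
    simp only [add_mul, mul_assoc, Complex.add_im, my_ofReal_mul_im] at h
    exact h
  have hs0 : 0 < Real.sin (φ - ψ) := Real.sin_pos_of_pos_of_lt_pi (by linarith) (by linarith)
  have hs1 : 0 ≤ Real.sin (φ - θ) := Real.sin_nonneg_of_nonneg_of_le_pi (by linarith) (by linarith)
  have hs2 : 0 ≤ Real.sin (θ - ψ) := Real.sin_nonneg_of_nonneg_of_le_pi (by linarith) (by linarith)
  rcases eq_or_lt_of_le hθ2 with h | h
  · rw [h]; exact h2
  · have hs1' : 0 < Real.sin (φ - θ) := Real.sin_pos_of_pos_of_lt_pi (by linarith) (by linarith)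
    by_contra hcon
    push_neg at hcon
    nlinarith

lemma sector_open {ψ φ : ℝ} (hψ : 0 < ψ) (hψφ : ψ < φ) (hφ : φ < Real.pi) :
    IsOpen {z : ℂ | ∃ a : ℝ, 0 < a ∧ ∃ θ ∈ Set.Ioo ψ φ, z = (a : ℂ) * Complex.exp (-Complex.I * θ)} := by
  have hset : {z : ℂ | ∃ a : ℝ, 0 < a ∧ ∃ θ ∈ Set.Ioo ψ φ, z = (a : ℂ) * Complex.exp (-Complex.I * θ)}
      = {z : ℂ | z.im < 0 ∧ Complex.arg z ∈ Set.Ioo (-φ) (-ψ)} := by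
    ext z
    constructor
    · rintro ⟨a, ha, θ, ⟨hθ1, hθ2⟩, rfl⟩
      have hsθ : 0 < Real.sin θ := Real.sin_pos_of_pos_of_lt_pi (by linarith) (by linarith)
      have hexp : Complex.exp (-Complex.I * θ)
          = Complex.cos ((-θ : ℝ) : ℂ) + Complex.sin ((-θ : ℝ) : ℂ) * Complex.I := by
        rw [← Complex.exp_mul_I]; congr 1; push_cast; ring
      constructor
      · rw [hexp, ← Complex.ofReal_cos, ← Complex.ofReal_sin]
        simp only [Complex.mul_im, Complex.add_im, Complex.add_re, Complex.ofReal_re,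
          Complex.ofReal_im, Complex.mul_re, Complex.I_re, Complex.I_im, Real.sin_neg]
        nlinarith
      · have harg : Complex.arg ((a : ℂ) * Complex.exp (-Complex.I * θ)) = -θ := by
          rw [hexp, Complex.arg_mul_cos_add_sin_mul_I ha ⟨by linarith, by linarith [Real.pi_pos]⟩]
        rw [harg]
        exact ⟨by linarith, by linarith⟩
    · rintro ⟨him, harg1, harg2⟩
      have hz : z ≠ 0 := by
        intro h; rw [h] at him; simp at him
      refine ⟨‖z‖, norm_pos_iff.mpr hz, -Complex.arg z, ⟨by linarith, by linarith⟩, ?_⟩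
      rw [show -Complex.I * ((-(Complex.arg z) : ℝ) : ℂ) = ↑(Complex.arg z) * Complex.I by
        push_cast; ring, Complex.norm_mul_exp_arg_mul_I]
  rw [hset, isOpen_iff_mem_nhds]
  rintro z ⟨him, harg⟩
  have hca : ContinuousAt Complex.arg z :=
    Complex.continuousAt_arg (Complex.mem_slitPlane_iff.mpr (Or.inr him.ne))
  have h1 : {w : ℂ | w.im < 0} ∈ 𝓝 z := (isOpen_lt Complex.continuous_im continuous_const).mem_nhds him
  have h2 : Complex.arg ⁻¹' (Set.Ioo (-φ) (-ψ)) ∈ 𝓝 z := hca.preimage_mem_nhds (isOpen_Ioo.mem_nhds harg)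
  filter_upwards [h1, h2] with w hw1 hw2
  exact ⟨hw1, hw2⟩

/-- contour rotation identity for the Fourier–Laplace transform of a
function analytic in a closed sector `{z = a e^{-iθ} : a > 0, ψ ≤ θ ≤ φ}`, bounded by
`M a^{-1/2}` there and with `a^{-1/2}‖F(a e^{-iθ})‖ → 0` uniformly in `θ` as `a → 0`
and as `a → +∞`: for `λ ∈ e^{iψ}ℂ⁻ ∩ e^{iφ}ℂ⁻`,
`∫_{e^{-iψ}ℝ⁺} e^{-iλz} F(z) dz = ∫_{e^{-iφ}ℝ⁺} e^{-iλz} F(z) dz`,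
both parametrized integrals being absolutely convergent. -/
theorem stmt1 {X : Type*} [NormedAddCommGroup X] [InnerProductSpace ℂ X] [CompleteSpace X]
    (ψ φ : ℝ) (hψ : 0 < ψ) (hψφ : ψ < φ) (hφ : φ < Real.pi)
    (F : ℂ → X) (M : ℝ)
    (hcont : ContinuousOn F
      {z : ℂ | ∃ a : ℝ, 0 < a ∧ ∃ θ ∈ Set.Icc ψ φ, z = (a : ℂ) * Complex.exp (-Complex.I * θ)})
    (hanal : DifferentiableOn ℂ F
      {z : ℂ | ∃ a : ℝ, 0 < a ∧ ∃ θ ∈ Set.Ioo ψ φ, z = (a : ℂ) * Complex.exp (-Complex.I * θ)})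
    (hbd : ∀ a : ℝ, 0 < a → ∀ θ ∈ Set.Icc ψ φ,
      ‖F ((a : ℂ) * Complex.exp (-Complex.I * θ))‖ ≤ M * a ^ (-(1 : ℝ)/2))
    (hzero : ∀ ε > (0:ℝ), ∃ δ > (0:ℝ), ∀ a : ℝ, 0 < a → a < δ → ∀ θ ∈ Set.Icc ψ φ,
      a ^ (-(1 : ℝ)/2) * ‖F ((a : ℂ) * Complex.exp (-Complex.I * θ))‖ ≤ ε)
    (hinfty : ∀ ε > (0:ℝ), ∃ A : ℝ, ∀ a : ℝ, A < a → ∀ θ ∈ Set.Icc ψ φ,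
      a ^ (-(1 : ℝ)/2) * ‖F ((a : ℂ) * Complex.exp (-Complex.I * θ))‖ ≤ ε) :
    ∀ l : ℂ, (Complex.exp (-Complex.I * ψ) * l).im < 0 →
      (Complex.exp (-Complex.I * φ) * l).im < 0 →
      IntegrableOn (fun t : ℝ =>
          (Complex.exp (-Complex.I * l * ((t : ℂ) * Complex.exp (-Complex.I * ψ)))
            * Complex.exp (-Complex.I * ψ)) • F ((t : ℂ) * Complex.exp (-Complex.I * ψ)))
        (Set.Ioi 0) ∧
      IntegrableOn (fun t : ℝ =>
          (Complex.exp (-Complex.I * l * ((t : ℂ) * Complex.exp (-Complex.I * φ)))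
            * Complex.exp (-Complex.I * φ)) • F ((t : ℂ) * Complex.exp (-Complex.I * φ)))
        (Set.Ioi 0) ∧
      (∫ t : ℝ in Set.Ioi 0,
          (Complex.exp (-Complex.I * l * ((t : ℂ) * Complex.exp (-Complex.I * ψ)))
            * Complex.exp (-Complex.I * ψ)) • F ((t : ℂ) * Complex.exp (-Complex.I * ψ)))
        = ∫ t : ℝ in Set.Ioi 0,
          (Complex.exp (-Complex.I * l * ((t : ℂ) * Complex.exp (-Complex.I * φ)))
            * Complex.exp (-Complex.I * φ)) • F ((t : ℂ) * Complex.exp (-Complex.I * φ)) := by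
  intro l hl1 hl2
  have hψφle : ψ ≤ φ := hψφ.le
  have hM : 0 ≤ M := by
    have h := hbd 1 one_pos ψ ⟨le_refl _, hψφle⟩
    simp only [Real.one_rpow, mul_one, Complex.ofReal_one] at h
    exact le_trans (norm_nonneg _) h
  -- the uniform exponential decay rate
  obtain ⟨θ₁, hθ₁mem, hθ₁max⟩ := isCompact_Icc.exists_isMaxOn (Set.nonempty_Icc.mpr hψφle)
    ((Complex.continuous_im.comp ((Complex.continuous_exp.comp
      (by continuity : Continuous fun θ : ℝ => -Complex.I * θ)).mul continuous_const)).continuousOn :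
      ContinuousOn (fun θ : ℝ => (Complex.exp (-Complex.I * θ) * l).im) (Set.Icc ψ φ))
  set c₀ : ℝ := -(Complex.exp (-Complex.I * θ₁) * l).im with hc₀def
  have hc₀ : 0 < c₀ := by
    have := im_neg_on_Icc hψ hψφ hφ hl1 hl2 hθ₁mem
    simp only [hc₀def]; linarith
  have him : ∀ θ ∈ Set.Icc ψ φ, (Complex.exp (-Complex.I * θ) * l).im ≤ -c₀ := by
    intro θ hθ
    have := hθ₁max hθ
    simp only [hc₀def]; simpa using this
  -- pointwise bound for the ray integrand
  have hg_bound : ∀ θ ∈ Set.Icc ψ φ, ∀ t : ℝ, 0 < t →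
      ‖(Complex.exp (-Complex.I * l * ((t : ℂ) * Complex.exp (-Complex.I * θ)))
          * Complex.exp (-Complex.I * θ)) • F ((t : ℂ) * Complex.exp (-Complex.I * θ))‖
        ≤ M * t ^ (-(1:ℝ)/2) * Real.exp (-(c₀ * t)) := by
    intro θ hθ t ht
    rw [norm_smul, norm_mul]
    have hE : ‖Complex.exp (-Complex.I * θ)‖ = 1 := by
      rw [Complex.norm_exp]; simp
    rw [hE, mul_one]
    have hA : ‖Complex.exp (-Complex.I * l * ((t : ℂ) * Complex.exp (-Complex.I * θ)))‖
        ≤ Real.exp (-(c₀ * t)) := by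
      rw [Complex.norm_exp, re_aux]
      apply Real.exp_le_exp.mpr
      have h := him θ hθ
      nlinarith
    have hF := hbd t ht θ hθ
    refine le_trans (mul_le_mul hA hF (norm_nonneg _) (Real.exp_pos _).le) (le_of_eq (by ring))
  -- integrability of the dominating function
  have hh_int : IntegrableOn (fun t : ℝ => M * t ^ (-(1:ℝ)/2) * Real.exp (-(c₀ * t)))
      (Set.Ioi 0) := by
    have h1 : IntegrableOn (fun x : ℝ => Real.exp (-x) * x ^ (-(1:ℝ)/2)) (Set.Ioi 0) := by
      have h0 := Real.GammaIntegral_convergent (s := 1/2) (by norm_num)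
      refine h0.congr_fun (fun x hx => ?_) measurableSet_Ioi
      norm_num
    have h2 : IntegrableOn (fun t : ℝ => Real.exp (-(c₀ * t)) * (c₀ * t) ^ (-(1:ℝ)/2))
        (Set.Ioi 0) := by
      have h := (integrableOn_Ioi_comp_mul_left_iff
        (fun x : ℝ => Real.exp (-x) * x ^ (-(1:ℝ)/2)) 0 hc₀).mpr
      simp only [mul_zero] at h
      exact h h1
    have h2' : IntegrableOn (fun t : ℝ =>
        M * c₀ ^ ((1:ℝ)/2) * (Real.exp (-(c₀ * t)) * (c₀ * t) ^ (-(1:ℝ)/2)))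
        (Set.Ioi 0) := h2.const_mul _
    refine h2'.congr_fun (fun t ht => ?_) measurableSet_Ioi
    have ht' : (0:ℝ) < t := ht
    have hc : c₀ ^ ((1:ℝ)/2) * c₀ ^ (-(1:ℝ)/2) = 1 := by
      rw [← Real.rpow_add hc₀]; norm_num
    beta_reduce
    rw [Real.mul_rpow hc₀.le ht'.le]
    linear_combination M * Real.exp (-(c₀ * t)) * t ^ (-(1:ℝ)/2) * hc
  -- integrability of the ray integrand
  have hg_int : ∀ θ ∈ Set.Icc ψ φ, IntegrableOn (fun t : ℝ =>
      (Complex.exp (-Complex.I * l * ((t : ℂ) * Complex.exp (-Complex.I * θ)))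
        * Complex.exp (-Complex.I * θ)) • F ((t : ℂ) * Complex.exp (-Complex.I * θ)))
      (Set.Ioi 0) := by
    intro θ hθ
    have hmap : Set.MapsTo (fun t : ℝ => (t : ℂ) * Complex.exp (-Complex.I * θ)) (Set.Ioi 0)
        {z : ℂ | ∃ a : ℝ, 0 < a ∧ ∃ θ' ∈ Set.Icc ψ φ, z = (a : ℂ) * Complex.exp (-Complex.I * θ')} :=
      fun t ht => ⟨t, ht, θ, hθ, rfl⟩
    have hcg : ContinuousOn (fun t : ℝ =>
        (Complex.exp (-Complex.I * l * ((t : ℂ) * Complex.exp (-Complex.I * θ)))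
          * Complex.exp (-Complex.I * θ)) • F ((t : ℂ) * Complex.exp (-Complex.I * θ)))
        (Set.Ioi 0) := by
      have hc1 : Continuous (fun t : ℝ => (t : ℂ) * Complex.exp (-Complex.I * θ)) :=
        Complex.continuous_ofReal.mul continuous_const
      refine ContinuousOn.smul (Continuous.continuousOn ?_) (hcont.comp hc1.continuousOn hmap)
      exact (Complex.continuous_exp.comp (continuous_const.mul hc1)).mul continuous_const
    refine MeasureTheory.Integrable.mono' hh_int
      (hcg.aestronglyMeasurable measurableSet_Ioi) ?_
    rw [ae_restrict_iff' measurableSet_Ioi]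
    exact Filter.Eventually.of_forall (fun t ht => hg_bound θ hθ t ht)
  set G : ℂ → X := fun w =>
    (Complex.exp (-Complex.I * l * Complex.exp w) * Complex.exp w) • F (Complex.exp w) with hGdef
  -- relation between the ray parametrization and the line parametrization
  have hline_eq : ∀ θ : ℝ, (fun x : ℝ => |Real.exp x| •
        ((Complex.exp (-Complex.I * l * ((Real.exp x : ℂ) * Complex.exp (-Complex.I * θ)))
          * Complex.exp (-Complex.I * θ)) • F ((Real.exp x : ℂ) * Complex.exp (-Complex.I * θ))))
      = fun x : ℝ => G (↑x + ↑(-θ) * Complex.I) := by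
    intro θ
    funext x
    rw [hGdef]
    simp only []
    rw [aux_exp x θ, abs_of_pos (Real.exp_pos x)]
    rw [show ∀ (r : ℝ) (v : X), r • v = ((r : ℂ)) • v from fun r v => by
      rw [show ((r : ℂ)) = r • (1 : ℂ) by simp [Complex.real_smul], smul_assoc, one_smul]]
    rw [smul_smul]
    congr 1
    ring
  have hcov : ∀ θ : ℝ, (∫ t in Set.Ioi (0:ℝ),
        (Complex.exp (-Complex.I * l * ((t : ℂ) * Complex.exp (-Complex.I * θ)))
          * Complex.exp (-Complex.I * θ)) • F ((t : ℂ) * Complex.exp (-Complex.I * θ)))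
      = ∫ x : ℝ, G (↑x + ↑(-θ) * Complex.I) := by
    intro θ
    have := integral_image_eq_integral_abs_deriv_smul MeasurableSet.univ
      (fun x _ => (Real.hasDerivAt_exp x).hasDerivWithinAt) Real.exp_injective.injOn
      (fun t : ℝ => (Complex.exp (-Complex.I * l * ((t : ℂ) * Complex.exp (-Complex.I * θ)))
          * Complex.exp (-Complex.I * θ)) • F ((t : ℂ) * Complex.exp (-Complex.I * θ)))
    rw [Set.image_univ, Real.range_exp] at this
    rw [this, hline_eq θ, MeasureTheory.setIntegral_univ]
  have hline_int : ∀ θ ∈ Set.Icc ψ φ, Integrable (fun x : ℝ => G (↑x + ↑(-θ) * Complex.I)) := by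
    intro θ hθ
    have h := (integrableOn_image_iff_integrableOn_abs_deriv_smul MeasurableSet.univ
      (fun x _ => (Real.hasDerivAt_exp x).hasDerivWithinAt) Real.exp_injective.injOn
      (fun t : ℝ => (Complex.exp (-Complex.I * l * ((t : ℂ) * Complex.exp (-Complex.I * θ)))
          * Complex.exp (-Complex.I * θ)) • F ((t : ℂ) * Complex.exp (-Complex.I * θ)))).mp
    rw [Set.image_univ, Real.range_exp] at h
    have h2 := h (hg_int θ hθ)
    rw [hline_eq θ] at h2
    exact MeasureTheory.integrableOn_univ.mp h2
  -- bound for G on the strip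
  have hGbd : ∀ x : ℝ, ∀ θ ∈ Set.Icc ψ φ, ‖G (↑x + ↑(-θ) * Complex.I)‖
      ≤ M * Real.exp (x/2) * Real.exp (-(c₀ * Real.exp x)) := by
    intro x θ hθ
    have hx : (0:ℝ) < Real.exp x := Real.exp_pos x
    have h1 : ‖G (↑x + ↑(-θ) * Complex.I)‖ = Real.exp x *
        ‖(Complex.exp (-Complex.I * l * ((Real.exp x : ℂ) * Complex.exp (-Complex.I * θ)))
          * Complex.exp (-Complex.I * θ)) • F ((Real.exp x : ℂ) * Complex.exp (-Complex.I * θ))‖ := by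
      rw [← congrFun (hline_eq θ) x, norm_smul, Real.norm_eq_abs, _root_.abs_abs, abs_of_pos hx]
    have h2 := hg_bound θ hθ (Real.exp x) hx
    rw [h1]
    refine le_trans (mul_le_mul_of_nonneg_left h2 hx.le) (le_of_eq ?_)
    have h3 : Real.exp x * Real.exp (x * (-(1:ℝ)/2)) = Real.exp (x/2) := by
      rw [← Real.exp_add]; congr 1; ring
    rw [Real.rpow_def_of_pos hx, Real.log_exp]
    linear_combination (M * Real.exp (-(c₀ * Real.exp x))) * h3
  -- Cauchy's theorem on rectangles
  have hrect : ∀ x₁ x₂ : ℝ,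
      (∫ x in x₁..x₂, G (↑x + ↑(-ψ) * Complex.I)) - (∫ x in x₁..x₂, G (↑x + ↑(-φ) * Complex.I))
        = (Complex.I • ∫ y in (-φ)..(-ψ), G (↑x₂ + ↑y * Complex.I))
          - Complex.I • ∫ y in (-φ)..(-ψ), G (↑x₁ + ↑y * Complex.I) := by
    intro x₁ x₂
    have h0 := Complex.integral_boundary_rect_eq_zero_of_differentiable_on_off_countable G
      (↑x₁ + ↑(-φ) * Complex.I) (↑x₂ + ↑(-ψ) * Complex.I) ∅ countable_empty ?_ ?_
    · simp only [Complex.add_re, Complex.add_im, Complex.ofReal_re, Complex.ofReal_im,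
        Complex.mul_re, Complex.mul_im, Complex.I_re, Complex.I_im, mul_zero, mul_one,
        zero_mul, sub_zero, add_zero, zero_add, zero_sub, neg_neg] at h0
      apply eq_of_sub_eq_zero
      have h1 : (∫ x in x₁..x₂, G (↑x + ↑(-ψ) * Complex.I))
            - (∫ x in x₁..x₂, G (↑x + ↑(-φ) * Complex.I))
            - ((Complex.I • ∫ y in (-φ)..(-ψ), G (↑x₂ + ↑y * Complex.I))
              - Complex.I • ∫ y in (-φ)..(-ψ), G (↑x₁ + ↑y * Complex.I))
          = -((∫ x in x₁..x₂, G (↑x + ↑(-φ) * Complex.I))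
            - (∫ x in x₁..x₂, G (↑x + ↑(-ψ) * Complex.I))
            + (Complex.I • ∫ y in (-φ)..(-ψ), G (↑x₂ + ↑y * Complex.I))
            - Complex.I • ∫ y in (-φ)..(-ψ), G (↑x₁ + ↑y * Complex.I)) := by abel
      rw [h1, h0, neg_zero]
    · -- continuity on the closed rectangle
      simp only [Complex.add_re, Complex.add_im, Complex.ofReal_re, Complex.ofReal_im,
        Complex.mul_re, Complex.mul_im, Complex.I_re, Complex.I_im, mul_zero, mul_one,
        zero_mul, sub_zero, add_zero, zero_add, zero_sub]
      rw [hGdef]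
      refine ContinuousOn.smul (Continuous.continuousOn ?_)
        (hcont.comp Complex.continuous_exp.continuousOn ?_)
      · exact (Complex.continuous_exp.comp (continuous_const.mul Complex.continuous_exp)).mul
          Complex.continuous_exp
      · intro w hw
        rw [Complex.mem_reProdIm] at hw
        have hwim : w.im ∈ Set.Icc (-φ) (-ψ) := by
          have h2 := hw.2
          rwa [Set.uIcc_of_le (by linarith : -(φ:ℝ) ≤ -ψ)] at h2
        exact ⟨Real.exp w.re, Real.exp_pos _, -w.im,
          ⟨by linarith [hwim.2], by linarith [hwim.1]⟩,
          by rw [← aux_exp w.re (-w.im), neg_neg, Complex.re_add_im]⟩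
    · -- differentiability on the open rectangle
      intro w hw
      rw [Set.diff_empty, Complex.mem_reProdIm] at hw
      simp only [Complex.add_re, Complex.add_im, Complex.ofReal_re, Complex.ofReal_im,
        Complex.mul_re, Complex.mul_im, Complex.I_re, Complex.I_im, mul_zero, mul_one,
        zero_mul, sub_zero, add_zero, zero_add, zero_sub] at hw
      have hwim : w.im ∈ Set.Ioo (-φ) (-ψ) := by
        have h2 := hw.2
        rwa [min_eq_left (by linarith : -(φ:ℝ) ≤ -ψ),
          max_eq_right (by linarith : -(φ:ℝ) ≤ -ψ)] at h2
      have hmem : Complex.exp w ∈ {z : ℂ | ∃ a : ℝ, 0 < a ∧ ∃ θ ∈ Set.Ioo ψ φ,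
          z = (a : ℂ) * Complex.exp (-Complex.I * θ)} :=
        ⟨Real.exp w.re, Real.exp_pos _, -w.im,
          ⟨by linarith [hwim.2], by linarith [hwim.1]⟩,
          by rw [← aux_exp w.re (-w.im), neg_neg, Complex.re_add_im]⟩
      have hFd : DifferentiableAt ℂ F (Complex.exp w) :=
        hanal.differentiableAt ((sector_open hψ hψφ hφ).mem_nhds hmem)
      rw [hGdef]
      refine DifferentiableAt.smul ?_ (hFd.comp w Complex.differentiable_exp.differentiableAt)
      exact ((Complex.differentiable_exp.comp ((differentiable_const _).mul
        Complex.differentiable_exp)).mul Complex.differentiable_exp).differentiableAt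
  -- limits of the dominating bound
  have hB_bot : Tendsto (fun x : ℝ => M * Real.exp (x/2) * Real.exp (-(c₀ * Real.exp x)))
      atBot (𝓝 0) := by
    have h1 : Tendsto (fun x : ℝ => Real.exp (x/2)) atBot (𝓝 0) :=
      Real.tendsto_exp_atBot.comp (Tendsto.atBot_div_const (by norm_num) tendsto_id)
    have h2 : Tendsto (fun x : ℝ => Real.exp (-(c₀ * Real.exp x))) atBot (𝓝 1) := by
      have h3 : Tendsto (fun x : ℝ => -(c₀ * Real.exp x)) atBot (𝓝 0) := by
        have h4 := (tendsto_const_nhds (x := c₀) (f := atBot)).mul Real.tendsto_exp_atBot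
        simpa using h4.neg
      have h5 := (Real.continuous_exp.tendsto 0).comp h3
      simpa [Function.comp_def] using h5
    have h6 := ((tendsto_const_nhds (x := M) (f := atBot)).mul h1).mul h2
    simpa using h6
  have hB_top : Tendsto (fun x : ℝ => M * Real.exp (x/2) * Real.exp (-(c₀ * Real.exp x)))
      atTop (𝓝 0) := by
    have key : (fun x : ℝ => M * Real.exp (x/2) * Real.exp (-(c₀ * Real.exp x)))
        = fun x : ℝ => M * ((Real.exp x) ^ ((1:ℝ)/2) * Real.exp (-c₀ * Real.exp x)) := by
      funext x
      rw [Real.rpow_def_of_pos (Real.exp_pos x), Real.log_exp, mul_one_div, mul_assoc, neg_mul c₀ (Real.exp x)]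
    rw [key]
    have h1 := (tendsto_rpow_mul_exp_neg_mul_atTop_nhds_zero ((1:ℝ)/2) c₀ hc₀).comp
      Real.tendsto_exp_atTop
    have h2 := (tendsto_const_nhds (x := M) (f := atTop)).mul h1
    simpa [Function.comp] using h2
  -- vertical integrals
  have hVbd : ∀ x : ℝ, ‖Complex.I • ∫ y in (-φ)..(-ψ), G (↑x + ↑y * Complex.I)‖
      ≤ (M * Real.exp (x/2) * Real.exp (-(c₀ * Real.exp x))) * (φ - ψ) := by
    intro x
    rw [norm_smul, Complex.norm_I, one_mul]
    have habs : |(-ψ) - (-φ)| = φ - ψ := by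
      rw [show (-ψ) - (-φ) = φ - ψ by ring, _root_.abs_of_nonneg (by linarith)]
    refine le_trans (intervalIntegral.norm_integral_le_of_norm_le_const
      (C := M * Real.exp (x/2) * Real.exp (-(c₀ * Real.exp x))) ?_) (le_of_eq (by rw [habs]))
    intro y hy
    rw [Set.uIoc_of_le (by linarith : -(φ:ℝ) ≤ -ψ)] at hy
    have hθ : -y ∈ Set.Icc ψ φ := ⟨by linarith [hy.2], by linarith [hy.1]⟩
    have hb := hGbd x (-y) hθ
    simpa using hb
  have hVtop : Tendsto (fun x : ℝ => Complex.I • ∫ y in (-φ)..(-ψ), G (↑x + ↑y * Complex.I))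
      atTop (𝓝 0) :=
    squeeze_zero_norm hVbd (by simpa using hB_top.mul_const (φ - ψ))
  have hVbot : Tendsto (fun x : ℝ => Complex.I • ∫ y in (-φ)..(-ψ), G (↑x + ↑y * Complex.I))
      atBot (𝓝 0) :=
    squeeze_zero_norm hVbd (by simpa using hB_bot.mul_const (φ - ψ))
  -- main limit argument
  have heq : (∫ x : ℝ, G (↑x + ↑(-ψ) * Complex.I)) = ∫ x : ℝ, G (↑x + ↑(-φ) * Complex.I) := by
    have hJψ : Tendsto (fun n : ℝ => ∫ x in (-n)..n, G (↑x + ↑(-ψ) * Complex.I)) atTop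
        (𝓝 (∫ x : ℝ, G (↑x + ↑(-ψ) * Complex.I))) :=
      intervalIntegral_tendsto_integral (hline_int ψ ⟨le_refl _, hψφle⟩)
        tendsto_neg_atTop_atBot tendsto_id
    have hJφ : Tendsto (fun n : ℝ => ∫ x in (-n)..n, G (↑x + ↑(-φ) * Complex.I)) atTop
        (𝓝 (∫ x : ℝ, G (↑x + ↑(-φ) * Complex.I))) :=
      intervalIntegral_tendsto_integral (hline_int φ ⟨hψφle, le_refl _⟩)
        tendsto_neg_atTop_atBot tendsto_id
    have hsub := hJψ.sub hJφ
    have hV : Tendsto (fun n : ℝ =>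
        (Complex.I • ∫ y in (-φ)..(-ψ), G (↑(n:ℝ) + ↑y * Complex.I))
          - Complex.I • ∫ y in (-φ)..(-ψ), G (↑(-n:ℝ) + ↑y * Complex.I)) atTop (𝓝 0) := by
      have := hVtop.sub (hVbot.comp tendsto_neg_atTop_atBot)
      simpa using this
    have hcongr : (fun n : ℝ => (∫ x in (-n)..n, G (↑x + ↑(-ψ) * Complex.I))
        - ∫ x in (-n)..n, G (↑x + ↑(-φ) * Complex.I))
        = fun n : ℝ => (Complex.I • ∫ y in (-φ)..(-ψ), G (↑(n:ℝ) + ↑y * Complex.I))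
          - Complex.I • ∫ y in (-φ)..(-ψ), G (↑(-n:ℝ) + ↑y * Complex.I) := by
      funext n
      exact hrect (-n) n
    rw [hcongr] at hsub
    have := tendsto_nhds_unique hsub hV
    exact sub_eq_zero.mp this
  refine ⟨hg_int ψ ⟨le_refl _, hψφle⟩, hg_int φ ⟨hψφle, le_refl _⟩, ?_⟩
  rw [hcov ψ, hcov φ, heq]
end

section
/- Let X be a complex Hilbert space, 0 < φ ≤ π, and let Φ be analytic on the strip Π = {s ∈ ℂ : 0 < Im s < φ} with values in X, continuous up to the closed strip, such that ‖Φ(s)‖ ≤ C for all s in the closed strip, and such that the boundary traces Φ(·) and Φ(· + iφ) belong to L²(ℝ; X). Then sup_{0 < ψ < φ} ∫_ℝ ‖Φ(r + iψ)‖² dr < ∞. -/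
/-!
Fix a line `im = t` and a set `s ⊂ ℝ` of finite measure, put `g r = Φ (r + t i)` and pair it with
the horizontal translates of `Φ`: `F z = ∫_s ⟪g r, Φ (r + z)⟫ dr`. This is a bounded holomorphic
function on the strip with `F (t i) = ‖g‖²_{L²(s)}`, and by Cauchy–Schwarz and translation
invariance `|F| ≤ ‖g‖_{L²(s)} N` on the boundary lines, where `N` is the larger of the two boundary
`L²` norms. Phragmén–Lindelöf gives `‖g‖²_{L²(s)} ≤ ‖g‖_{L²(s)} N`, so `‖g‖_{L²(s)} ≤ N`, and
exhausting `ℝ` by sets of finite measure bounds the whole line by `N`.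
-/

open Complex MeasureTheory Set Filter Metric
open scoped Topology ENNReal

section L2

variable {α 𝕜 E : Type*} [MeasurableSpace α] {μ : Measure α} [RCLike 𝕜]
  [NormedAddCommGroup E] [InnerProductSpace 𝕜 E]

lemma eLpNorm_two_sq (f : α → E) : eLpNorm f 2 μ ^ 2 = ∫⁻ x, ‖f x‖ₑ ^ 2 ∂μ := by
  simpa using eLpNorm_nnreal_pow_eq_lintegral (μ := μ) (f := f) (p := 2) two_ne_zero

lemma enorm_integral_inner_le {f g : α → E} (hf : AEStronglyMeasurable f μ)
    (hg : AEStronglyMeasurable g μ) :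
    ‖∫ x, inner 𝕜 (f x) (g x) ∂μ‖ₑ ≤ eLpNorm f 2 μ * eLpNorm g 2 μ :=
  calc ‖∫ x, inner 𝕜 (f x) (g x) ∂μ‖ₑ ≤ eLpNorm (fun x => inner 𝕜 (f x) (g x)) 1 μ := by
        rw [eLpNorm_one_eq_lintegral_enorm]; exact enorm_integral_le_lintegral_enorm _
    _ ≤ eLpNorm f 2 μ * eLpNorm g 2 μ := by
        simpa using eLpNorm_le_eLpNorm_mul_eLpNorm_of_nnnorm hf hg (fun u v => inner 𝕜 u v) 1
          (ae_of_all _ fun x => by simpa using nnnorm_inner_le_nnnorm (𝕜 := 𝕜) (f x) (g x))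

lemma enorm_integral_inner_self {f : α → E} (hf : MemLp f 2 μ) :
    ‖∫ x, inner 𝕜 (f x) (f x) ∂μ‖ₑ = eLpNorm f 2 μ ^ 2 := by
  simp_rw [inner_self_eq_norm_sq_to_K, ← RCLike.ofReal_pow]
  rw [integral_ofReal, ← ofReal_norm, RCLike.norm_ofReal,
    abs_of_nonneg (integral_nonneg fun x => by positivity),
    ofReal_integral_eq_lintegral_ofReal (hf.integrable_norm_pow two_ne_zero)
      (ae_of_all _ fun x => by positivity), eLpNorm_two_sq]
  simp_rw [ENNReal.ofReal_pow (norm_nonneg _), ofReal_norm]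

end L2

lemma eLpNorm_comp_add_right {G E : Type*} [MeasurableSpace G] [AddGroup G] [MeasurableAdd G]
    (μ : Measure G) [μ.IsAddRightInvariant] [NormedAddCommGroup E] (g : G → E) (x : G)
    (p : ℝ≥0∞) : eLpNorm (fun r => g (r + x)) p μ = eLpNorm g p μ := by
  have := (MeasurableEquiv.addRight x).measurableEmbedding.eLpNorm_map_measure (g := g) (p := p)
    (μ := μ)
  rw [MeasurableEquiv.coe_addRight, map_add_right_eq_self] at this
  exact this.symm

lemma ENNReal.le_of_sq_le_mul {a b : ℝ≥0∞} (h : a ^ 2 ≤ a * b) (ha : a ≠ ∞) : a ≤ b := by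
  rcases eq_or_ne a 0 with h0 | h0
  · simp [h0]
  · exact (ENNReal.mul_le_mul_iff_right h0 ha).1 (by rwa [← pow_two])

lemma differentiableOn_integral_of_bounded {α E : Type*} [MeasurableSpace α] {μ : Measure α}
    [IsFiniteMeasure μ] [NormedAddCommGroup E] [NormedSpace ℂ E] [CompleteSpace E]
    {U : Set ℂ} (hU : IsOpen U) {F : ℂ → α → E} {C : ℝ}
    (hF_meas : ∀ z ∈ U, AEStronglyMeasurable (F z) μ)
    (hF_diff : ∀ a, DifferentiableOn ℂ (F · a) U)
    (hF_bound : ∀ z ∈ U, ∀ a, ‖F z a‖ ≤ C) :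
    DifferentiableOn ℂ (fun z => ∫ a, F z a ∂μ) U := by
  intro z₀ hz₀
  obtain ⟨ε, hε, hball⟩ := Metric.isOpen_iff.1 hU z₀ hz₀
  have hδ : 0 < ε / 2 := half_pos hε
  have hsub : ∀ x ∈ ball z₀ (ε / 2), ball x (ε / 2) ⊆ U := fun x hx =>
    (ball_subset_ball' (by linarith [mem_ball.1 hx])).trans hball
  have hderiv : ∀ a, ∀ x ∈ ball z₀ (ε / 2), HasDerivAt (F · a) (deriv (F · a) x) x :=
    fun a x hx => ((hF_diff a).differentiableAt
      (hU.mem_nhds (hsub x hx (mem_ball_self hδ)))).hasDerivAt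
  -- Cauchy estimate, uniform in `a`
  have hderiv_bound : ∀ a, ∀ x ∈ ball z₀ (ε / 2), ‖deriv (F · a) x‖ ≤ 2 * C / (ε / 2) := by
    intro a x hx
    refine Complex.norm_deriv_le_div_of_mapsTo_ball ((hF_diff a).mono (hsub x hx))
      (fun w hw => ?_) hδ
    rw [mem_closedBall, dist_eq_norm]
    linarith [norm_sub_le (F w a) (F x a), hF_bound w (hsub x hx hw) a,
      hF_bound x (hsub x hx (mem_ball_self hδ)) a]
  -- `deriv` is the pointwise limit of measurable difference quotients with steps `ε / (n + 2)`
  have hderiv_meas : AEStronglyMeasurable (fun a => deriv (F · a) z₀) μ := by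
    set h : ℕ → ℂ := fun n => ((ε / (n + 2) : ℝ) : ℂ)
    have hh_mem : ∀ n, z₀ + h n ∈ U := fun n => by
      refine hball (mem_ball_iff_norm.2 ?_)
      rw [add_sub_cancel_left, norm_real, Real.norm_of_nonneg (by positivity),
        div_lt_iff₀ (by positivity)]
      nlinarith [n.cast_nonneg (α := ℝ)]
    have hh_tendsto : Tendsto h atTop (𝓝[≠] 0) := by
      refine tendsto_nhdsWithin_iff.2 ⟨?_, Eventually.of_forall fun n => ?_⟩
      · have := (tendsto_const_div_atTop_nhds_zero_nat ε).comp (tendsto_add_atTop_nat 2)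
        simpa [h, Function.comp_def] using (continuous_ofReal.tendsto 0).comp this
      · simp only [h, mem_compl_iff, mem_singleton_iff, ofReal_eq_zero]
        positivity
    exact aestronglyMeasurable_of_tendsto_ae atTop
      (fun n => ((hF_meas _ (hh_mem n)).sub (hF_meas z₀ hz₀)).const_smul (h n)⁻¹)
      (ae_of_all _ fun a => (hderiv a z₀ (mem_ball_self hδ)).tendsto_slope_zero.comp hh_tendsto)
  exact (hasDerivAt_integral_of_dominated_loc_of_deriv_le (ball_mem_nhds z₀ hδ)
    (eventually_of_mem (ball_mem_nhds z₀ hδ) fun x hx => hF_meas x (hsub x hx (mem_ball_self hδ)))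
    (Integrable.of_bound (hF_meas z₀ hz₀) C (ae_of_all _ (hF_bound z₀ hz₀))) hderiv_meas
    (ae_of_all _ hderiv_bound) (integrable_const _)
    (ae_of_all _ hderiv)).2.differentiableAt.differentiableWithinAt

lemma norm_le_of_bounded_horizontal_strip {E : Type*} [NormedAddCommGroup E] [NormedSpace ℂ E]
    {a b C K : ℝ} {f : ℂ → E} {z : ℂ} (hab : a < b) (hfd : DiffContOnCl ℂ f (im ⁻¹' Ioo a b))
    (hK : ∀ w ∈ im ⁻¹' Ioo a b, ‖f w‖ ≤ K)
    (hle_a : ∀ w : ℂ, w.im = a → ‖f w‖ ≤ C) (hle_b : ∀ w : ℂ, w.im = b → ‖f w‖ ≤ C)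
    (hza : a ≤ z.im) (hzb : z.im ≤ b) : ‖f z‖ ≤ C := by
  refine PhragmenLindelof.horizontal_strip hfd ⟨0, div_pos Real.pi_pos (sub_pos.2 hab), 0, ?_⟩
    hle_a hle_b hza hzb
  refine Asymptotics.IsBigO.of_bound K
    (eventually_inf_principal.2 (Eventually.of_forall fun w hw => ?_))
  simpa using hK w hw

section Strip

variable {X : Type*} [NormedAddCommGroup X] [InnerProductSpace ℂ X]

lemma diffContOnCl_integral_inner_comp_add {a b C : ℝ} {Φ : ℂ → X}
    (hanal : DifferentiableOn ℂ Φ (im ⁻¹' Ioo a b)) (hcont : ContinuousOn Φ (im ⁻¹' Icc a b))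
    (hbd : ∀ z ∈ im ⁻¹' Icc a b, ‖Φ z‖ ≤ C) {μ : Measure ℝ} [IsFiniteMeasure μ] {g : ℝ → X}
    (hg : AEStronglyMeasurable g μ) {Cg : ℝ} (hg_bd : ∀ r, ‖g r‖ ≤ Cg) :
    DiffContOnCl ℂ (fun z => ∫ r, inner ℂ (g r) (Φ (r + z)) ∂μ) (im ⁻¹' Ioo a b) := by
  have hshift : ∀ z ∈ im ⁻¹' Icc a b, ∀ r : ℝ, (r : ℂ) + z ∈ im ⁻¹' Icc a b := fun z hz r => by
    simpa using hz
  have hinner_meas : ∀ z ∈ im ⁻¹' Icc a b,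
      AEStronglyMeasurable (fun r : ℝ => inner ℂ (g r) (Φ (r + z))) μ := fun z hz =>
    hg.inner (hcont.comp_continuous (by fun_prop) (hshift z hz)).aestronglyMeasurable
  have hinner_bound : ∀ z ∈ im ⁻¹' Icc a b, ∀ r, ‖inner ℂ (g r) (Φ (r + z))‖ ≤ Cg * C :=
    fun z hz r => (norm_inner_le_norm _ _).trans (mul_le_mul (hg_bd r) (hbd _ (hshift z hz r))
      (norm_nonneg _) ((norm_nonneg _).trans (hg_bd r)))
  refine ⟨differentiableOn_integral_of_bounded (isOpen_Ioo.preimage continuous_im)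
    (fun z hz => hinner_meas z ⟨hz.1.le, hz.2.le⟩) (fun r => ?_)
    (fun z hz => hinner_bound z ⟨hz.1.le, hz.2.le⟩), ?_⟩
  · exact (innerSL ℂ (g r)).differentiable.comp_differentiableOn
      (hanal.comp (by fun_prop) fun z hz => by simpa using hz)
  · have hcl : closure (im ⁻¹' Ioo a b) ⊆ im ⁻¹' Icc a b := by
      rw [closure_preimage_im]
      exact preimage_mono (closure_minimal Ioo_subset_Icc_self isClosed_Icc)
    exact (continuousOn_of_dominated hinner_meas (fun z hz => ae_of_all _ (hinner_bound z hz))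
      (integrable_const _) (ae_of_all _ fun r => continuousOn_const.inner
        (hcont.comp (by fun_prop) (hshift · · r)))).mono hcl

lemma enorm_setIntegral_inner_comp_add_le {Φ : ℂ → X} {g : ℝ → X} {s : Set ℝ} {z : ℂ}
    (hg : AEStronglyMeasurable g (volume.restrict s))
    (hΦ : AEStronglyMeasurable (fun r : ℝ => Φ (r + z)) (volume.restrict s)) :
    ‖∫ r in s, inner ℂ (g r) (Φ (r + z))‖ₑ ≤
      eLpNorm g 2 (volume.restrict s) * eLpNorm (fun r : ℝ => Φ (r + z.im * I)) 2 volume := by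
  have htrans : (fun r : ℝ => Φ (r + z)) = fun r => Φ ((r + z.re : ℝ) + z.im * I) := by
    ext r; congr 1; apply Complex.ext <;> simp
  calc _ ≤ eLpNorm g 2 (volume.restrict s) *
        eLpNorm (fun r : ℝ => Φ (r + z)) 2 (volume.restrict s) := enorm_integral_inner_le hg hΦ
    _ ≤ eLpNorm g 2 (volume.restrict s) * eLpNorm (fun r : ℝ => Φ (r + z)) 2 volume := by
        gcongr; exact Measure.restrict_le_self
    _ = _ := by rw [htrans, eLpNorm_comp_add_right volume (fun r : ℝ => Φ (r + z.im * I))]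

lemma eLpNorm_restrict_horizontal_line_le {a b t C : ℝ} (hab : a < b) {Φ : ℂ → X}
    (hanal : DifferentiableOn ℂ Φ (im ⁻¹' Ioo a b)) (hcont : ContinuousOn Φ (im ⁻¹' Icc a b))
    (hbd : ∀ z ∈ im ⁻¹' Icc a b, ‖Φ z‖ ≤ C) (ht : t ∈ Icc a b) {s : Set ℝ}
    (hs : volume s ≠ ∞) :
    eLpNorm (fun r : ℝ => Φ (r + t * I)) 2 (volume.restrict s) ≤
      max (eLpNorm (fun r : ℝ => Φ (r + a * I)) 2 volume)
        (eLpNorm (fun r : ℝ => Φ (r + b * I)) 2 volume) := by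
  set N := max (eLpNorm (fun r : ℝ => Φ (r + a * I)) 2 volume)
    (eLpNorm (fun r : ℝ => Φ (r + b * I)) 2 volume)
  rcases eq_or_ne N ∞ with hN | hN
  · exact hN ▸ le_top
  set μ := volume.restrict s
  have : IsFiniteMeasure μ := isFiniteMeasure_restrict.2 hs
  have hline : ∀ z ∈ im ⁻¹' Icc a b, Continuous fun r : ℝ => Φ (r + z) := fun z hz =>
    hcont.comp_continuous (by fun_prop) fun r => by simpa using hz
  have hbd_line : ∀ z ∈ im ⁻¹' Icc a b, ∀ r : ℝ, ‖Φ (r + z)‖ ≤ C := fun z hz r =>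
    hbd _ (by simpa using hz)
  have htI : (t : ℂ) * I ∈ im ⁻¹' Icc a b := by simpa using ht
  set g := fun r : ℝ => Φ (r + t * I)
  have hg : MemLp g 2 μ :=
    .of_bound (hline _ htI).aestronglyMeasurable C (ae_of_all _ (hbd_line _ htI))
  set F : ℂ → ℂ := fun z => ∫ r, inner ℂ (g r) (Φ (r + z)) ∂μ
  have hF := diffContOnCl_integral_inner_comp_add hanal hcont hbd hg.aestronglyMeasurable
    (hbd_line _ htI)
  have hF_bound : ∀ z ∈ im ⁻¹' Ioo a b, ‖F z‖ ≤ C * C * μ.real univ := fun z hz =>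
    norm_integral_le_of_norm_le_const (ae_of_all _ fun r => (norm_inner_le_norm _ _).trans
      (mul_le_mul (hbd_line _ htI r) (hbd_line z ⟨hz.1.le, hz.2.le⟩ r) (norm_nonneg _)
        ((norm_nonneg _).trans (hbd _ htI))))
  have hgN : eLpNorm g 2 μ * N ≠ ∞ := ENNReal.mul_ne_top hg.eLpNorm_ne_top hN
  have hF_boundary : ∀ z : ℂ, z.im = a ∨ z.im = b → ‖F z‖ ≤ (eLpNorm g 2 μ * N).toReal := by
    intro z hz
    have hz' : z ∈ im ⁻¹' Icc a b := by rcases hz with h | h <;> simp [h, hab.le]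
    rw [← toReal_enorm]
    refine ENNReal.toReal_mono hgN ((enorm_setIntegral_inner_comp_add_le hg.aestronglyMeasurable
      (hline z hz').aestronglyMeasurable).trans ?_)
    gcongr
    rcases hz with h | h <;> rw [h]
    exacts [le_max_left _ _, le_max_right _ _]
  have hFt : ‖F (t * I)‖ ≤ (eLpNorm g 2 μ * N).toReal :=
    norm_le_of_bounded_horizontal_strip hab hF hF_bound
      (fun w hw => hF_boundary w (.inl hw)) (fun w hw => hF_boundary w (.inr hw))
      (by simpa using ht.1) (by simpa using ht.2)
  have hsq : eLpNorm g 2 μ ^ 2 ≤ eLpNorm g 2 μ * N := by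
    rw [← enorm_integral_inner_self (𝕜 := ℂ) hg, ← ofReal_norm, ← ENNReal.ofReal_toReal hgN]
    exact ENNReal.ofReal_le_ofReal hFt
  exact ENNReal.le_of_sq_le_mul hsq hg.eLpNorm_ne_top

end Strip

theorem stmt3_general {X : Type*} [NormedAddCommGroup X] [InnerProductSpace ℂ X]
    (φ : ℝ) (hφ0 : 0 < φ) (Φ : ℂ → X) (C : ℝ)
    (hanal : DifferentiableOn ℂ Φ {s : ℂ | 0 < s.im ∧ s.im < φ})
    (hcont : ContinuousOn Φ {s : ℂ | 0 ≤ s.im ∧ s.im ≤ φ})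
    (hbd : ∀ s : ℂ, 0 ≤ s.im → s.im ≤ φ → ‖Φ s‖ ≤ C)
    (h0 : (∫⁻ r : ℝ, (‖Φ (r : ℂ)‖₊ : ℝ≥0∞) ^ 2) < ⊤)
    (hφL : (∫⁻ r : ℝ, (‖Φ ((r : ℂ) + φ * Complex.I)‖₊ : ℝ≥0∞) ^ 2) < ⊤) :
    ∃ M : ℝ, ∀ ψ ∈ Set.Ioo 0 φ,
      ∫⁻ r : ℝ, (‖Φ ((r : ℂ) + ψ * Complex.I)‖₊ : ℝ≥0∞) ^ 2 ≤ ENNReal.ofReal M := by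
  refine ⟨(max (∫⁻ r : ℝ, (‖Φ (r : ℂ)‖₊ : ℝ≥0∞) ^ 2)
    (∫⁻ r : ℝ, (‖Φ ((r : ℂ) + φ * Complex.I)‖₊ : ℝ≥0∞) ^ 2)).toReal, fun ψ hψ => ?_⟩
  rw [ENNReal.ofReal_toReal (max_lt h0 hφL).ne]
  refine lintegral_le_of_forall_fin_meas_le _ fun s _ hs => ?_
  have hline := eLpNorm_restrict_horizontal_line_le hφ0 hanal hcont (fun z hz => hbd z hz.1 hz.2)
    (Ioo_subset_Icc_self hψ) hs
  calc ∫⁻ r in s, (‖Φ ((r : ℂ) + ψ * Complex.I)‖₊ : ℝ≥0∞) ^ 2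
      = eLpNorm (fun r : ℝ => Φ (r + ψ * I)) 2 (volume.restrict s) ^ 2 := (eLpNorm_two_sq _).symm
    _ ≤ _ := pow_le_pow_left' hline 2
    _ = _ := by
      rw [(pow_left_mono 2).map_max, eLpNorm_two_sq, eLpNorm_two_sq]
      simp only [ofReal_zero, zero_mul, add_zero]
      rfl

/-- if `Φ` is analytic on the strip `0 < Im s < φ` (`0 < φ ≤ π`),
continuous and bounded on the closed strip, and its boundary traces on `ℝ` and
`ℝ + iφ` are square integrable, then the `L²` norms on intermediate lines are
uniformly bounded. -/
theorem stmt3 {X : Type*} [NormedAddCommGroup X] [InnerProductSpace ℂ X] [CompleteSpace X]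
    (φ : ℝ) (hφ0 : 0 < φ) (hφπ : φ ≤ Real.pi) (Φ : ℂ → X) (C : ℝ)
    (hanal : DifferentiableOn ℂ Φ {s : ℂ | 0 < s.im ∧ s.im < φ})
    (hcont : ContinuousOn Φ {s : ℂ | 0 ≤ s.im ∧ s.im ≤ φ})
    (hbd : ∀ s : ℂ, 0 ≤ s.im → s.im ≤ φ → ‖Φ s‖ ≤ C)
    (h0 : (∫⁻ r : ℝ, (‖Φ (r : ℂ)‖₊ : ℝ≥0∞) ^ 2) < ⊤)
    (hφL : (∫⁻ r : ℝ, (‖Φ ((r : ℂ) + φ * Complex.I)‖₊ : ℝ≥0∞) ^ 2) < ⊤) :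
    ∃ M : ℝ, ∀ ψ ∈ Set.Ioo 0 φ,
      ∫⁻ r : ℝ, (‖Φ ((r : ℂ) + ψ * Complex.I)‖₊ : ℝ≥0∞) ^ 2 ≤ ENNReal.ofReal M :=
  stmt3_general φ hφ0 Φ C hanal hcont hbd h0 hφL
end

section
/- Let X be a complex Hilbert space, λ ∈ ℂ⁺ fixed, and ε > 0 sufficiently small (specifically |ξ + iη| < exp(-2 max{1, |log λ|}) for |ξ| < ε, η ∈ [0, ε], and ε ≪ Im λ). Then there is a constant C(ε, λ) such that for all η ∈ [0, ε]: ∫_{-∞}^{+∞} |log(ξ + iη) - log λ|⁻² |ξ + iη|⁻¹ dξ ≤ C(ε, λ). -/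
open Complex MeasureTheory Set Filter
open scoped Topology ENNReal

/-!
Write `z = ξ + iη`, so `‖z‖ ≥ |ξ|`, and `M = max 1 ‖log λ‖`. Since
`‖log z‖ ≥ |Re (log z)| = |log ‖z‖|`, as soon as `|log ‖z‖| > 2M` we get
`‖log z - log λ‖ ≥ |log ‖z‖| / 2`, so the integrand is at most
`4 / (‖z‖ log² ‖z‖) ≤ 4 / (|ξ| log² |ξ|)` by monotonicity of `r log² r` near `0` and on `[1, ∞)`.
This covers `|ξ| < ε`, where `‖z‖ < e^{-2M}` by hypothesis, and `|ξ| > e^{2M}`. In between,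
`η ≤ ε < Im λ` keeps `z` at distance at least `Im λ - ε` from `λ`, which bounds `‖log z - log λ‖`
from below, while `‖z‖ ≥ ε`. The resulting majorant depends on `|ξ|` only, not on `η`, and it is
integrable because `1 / (r log² r)` is the derivative of `-1 / log r`.
-/

theorem integrable_comp_abs_of_integrableOn_Ioi {E : Type*} [NormedAddCommGroup E] {f : ℝ → E}
    (hf : IntegrableOn f (Ioi 0)) : Integrable (fun x => f |x|) := by
  have hpos : IntegrableOn (fun x => f |x|) (Ioi 0) :=
    hf.congr_fun (fun x hx => by rw [abs_of_pos hx]) measurableSet_Ioi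
  have hneg : IntegrableOn (fun x => f |x|) (Iic 0) := by
    have hemb : MeasurableEmbedding (Neg.neg : ℝ → ℝ) := (Homeomorph.neg ℝ).measurableEmbedding
    rw [← Measure.map_neg_eq_self (volume : Measure ℝ), hemb.integrableOn_map_iff]
    simpa [Function.comp_def, neg_preimage] using (integrableOn_Ici_iff_integrableOn_Ioi).2 hpos
  simpa using hneg.union hpos

theorem hasDerivAt_neg_inv_log {x : ℝ} (hx : x ≠ 0) (hlog : Real.log x ≠ 0) :
    HasDerivAt (fun y => -(Real.log y)⁻¹) (x * Real.log x ^ 2)⁻¹ x := by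
  refine ((Real.hasDerivAt_log hx).inv hlog).neg.congr_deriv ?_
  field_simp

theorem integrableOn_Ioi_inv_mul_log_sq {b : ℝ} (hb : 1 < b) :
    IntegrableOn (fun x => (x * Real.log x ^ 2)⁻¹) (Ioi b) := by
  have hlog : ∀ x ∈ Ici b, 0 < Real.log x := fun x hx => Real.log_pos (hb.trans_le hx)
  refine integrableOn_Ioi_deriv_of_nonneg' (l := 0)
    (fun x hx => hasDerivAt_neg_inv_log (by linarith [hx.out]) (hlog x hx).ne')
    (fun x hx => inv_nonneg.2 (mul_nonneg (by linarith [hx.out]) (sq_nonneg _))) ?_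
  simpa using (tendsto_inv_atTop_zero.comp Real.tendsto_log_atTop).neg

theorem integrableOn_Ioc_inv_mul_log_sq {b : ℝ} (hb : b < 1) :
    IntegrableOn (fun x => (x * Real.log x ^ 2)⁻¹) (Ioc 0 b) := by
  refine intervalIntegral.integrableOn_deriv_of_nonneg (g := fun x => -(Real.log x)⁻¹) ?_
    (fun x hx => hasDerivAt_neg_inv_log hx.1.ne' (Real.log_neg hx.1 (by linarith [hx.2])).ne)
    (fun x hx => by have := hx.1; positivity)
  intro x hx
  rcases hx.1.eq_or_lt with rfl | hx0
  · -- `Real.log 0 = 0`, so the antiderivative takes at `0` its limit from the right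
    refine (continuousWithinAt_Ioi_iff_Ici.1 ?_).mono Icc_subset_Ici_self
    simpa [ContinuousWithinAt] using
      (tendsto_inv_atBot_zero.comp Real.tendsto_log_nhdsGT_zero).neg
  · have hlog : Real.log x ≠ 0 := (Real.log_neg hx0 (by linarith [hx.2])).ne
    exact ((Real.continuousAt_log hx0.ne').inv₀ hlog).neg.continuousWithinAt

theorem monotoneOn_mul_log_sq :
    MonotoneOn (fun x => x * Real.log x ^ 2) (Ioc 0 (Real.exp (-2))) := by
  refine monotoneOn_of_hasDerivWithinAt_nonneg (f' := fun x => Real.log x * (Real.log x + 2))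
    (convex_Ioc _ _) (fun x hx => ?_) (fun x hx => ?_) (fun x hx => ?_)
  · exact (continuousAt_id.mul ((Real.continuousAt_log hx.1.ne').pow 2)).continuousWithinAt
  · rw [interior_Ioc] at hx
    have hx0 := hx.1.ne'
    refine (((hasDerivAt_id x).mul ((Real.hasDerivAt_log hx0).pow 2)).congr_deriv ?_
      ).hasDerivWithinAt
    simp only [Pi.pow_apply, id]
    field_simp
    ring
  · rw [interior_Ioc] at hx
    have : Real.log x < -2 := by
      rw [Real.log_lt_iff_lt_exp hx.1]; exact hx.2
    nlinarith

theorem antitoneOn_inv_mul_log_sq_Ioc :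
    AntitoneOn (fun x => (x * Real.log x ^ 2)⁻¹) (Ioc 0 (Real.exp (-2))) := fun a ha b hb hab => by
  have : Real.log a ≠ 0 := (Real.log_neg ha.1 (ha.2.trans_lt (by simp))).ne
  have := ha.1
  exact inv_anti₀ (by positivity) (monotoneOn_mul_log_sq ha hb hab)

theorem antitoneOn_inv_mul_log_sq_Ioi :
    AntitoneOn (fun x => (x * Real.log x ^ 2)⁻¹) (Ioi 1) := fun a ha b hb hab => by
  have := Real.log_pos ha
  have : (0:ℝ) < a := by linarith [ha.out]
  have : (0:ℝ) < b := by linarith [hb.out]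
  exact inv_anti₀ (by positivity) (by gcongr)

theorem min_le_norm_log_sub_log {z l : ℂ} (hz : z ≠ 0) (hl : l ≠ 0) :
    min 1 (‖z - l‖ / (2 * ‖l‖)) ≤ ‖Complex.log z - Complex.log l‖ := by
  rcases le_or_gt 1 ‖Complex.log z - Complex.log l‖ with h | h
  · exact (min_le_left _ _).trans h
  refine (min_le_right _ _).trans ?_
  -- `exp (log z - log l) = z / l`, and `‖exp w - 1‖ ≤ 2 ‖w‖` for `‖w‖ ≤ 1`
  have hexp := Complex.norm_exp_sub_one_le h.le
  rw [Complex.exp_sub, Complex.exp_log hz, Complex.exp_log hl, div_sub_one hl, norm_div] at hexp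
  rw [div_le_iff₀ (norm_pos_iff.2 hl)] at hexp
  rw [div_le_iff₀ (by positivity)]
  linarith

theorem inv_norm_log_sub_log_sq_mul_norm_le {z l : ℂ}
    (h : 2 * ‖Complex.log l‖ < |Real.log ‖z‖|) :
    (‖Complex.log z - Complex.log l‖ ^ 2 * ‖z‖)⁻¹ ≤ 4 * (‖z‖ * Real.log ‖z‖ ^ 2)⁻¹ := by
  have hre : |Real.log ‖z‖| ≤ ‖Complex.log z‖ := by
    simpa [Complex.log_re] using Complex.abs_re_le_norm (Complex.log z)
  have hΔ : |Real.log ‖z‖| / 2 ≤ ‖Complex.log z - Complex.log l‖ := by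
    linarith [norm_sub_norm_le (Complex.log z) (Complex.log l)]
  have hlog : 0 < |Real.log ‖z‖| := by linarith [norm_nonneg (Complex.log l)]
  have hz : 0 < ‖z‖ := norm_pos_iff.2 (by rintro rfl; simp at hlog)
  calc (‖Complex.log z - Complex.log l‖ ^ 2 * ‖z‖)⁻¹
      ≤ ((|Real.log ‖z‖| / 2) ^ 2 * ‖z‖)⁻¹ := by gcongr
    _ = 4 * (‖z‖ * Real.log ‖z‖ ^ 2)⁻¹ := by rw [div_pow, sq_abs]; field_simp; ring

theorem inv_norm_log_sub_log_sq_mul_norm_le_of_im_le {z l : ℂ} {t δ : ℝ} (hl : l ≠ 0)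
    (hzt : z.im ≤ t) (htl : t < l.im) (hδ : 0 < δ) (hδz : δ ≤ ‖z‖) :
    (‖Complex.log z - Complex.log l‖ ^ 2 * ‖z‖)⁻¹
      ≤ (min 1 ((l.im - t) / (2 * ‖l‖)) ^ 2 * δ)⁻¹ := by
  have hc : 0 < min 1 ((l.im - t) / (2 * ‖l‖)) :=
    lt_min one_pos (div_pos (by linarith) (by positivity))
  have hzl : l.im - t ≤ ‖z - l‖ :=
    calc l.im - t ≤ |(z - l).im| := by
          rw [sub_im, abs_sub_comm]; exact le_abs.2 (Or.inl (by linarith))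
      _ ≤ ‖z - l‖ := abs_im_le_norm _
  have hΔ : min 1 ((l.im - t) / (2 * ‖l‖)) ≤ ‖Complex.log z - Complex.log l‖ :=
    (min_le_min_left 1 (by gcongr)).trans
      (min_le_norm_log_sub_log (norm_pos_iff.1 (hδ.trans_le hδz)) hl)
  gcongr

noncomputable def radialMajorant (ε R K : ℝ) (r : ℝ) : ℝ :=
  if r ∈ Icc ε R then K else 4 * (r * Real.log r ^ 2)⁻¹

theorem radialMajorant_nonneg {ε R K r : ℝ} (hK : 0 ≤ K) (hr : 0 ≤ r) :
    0 ≤ radialMajorant ε R K r := by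
  unfold radialMajorant
  split_ifs <;> positivity

theorem integrable_radialMajorant_comp_abs {ε R : ℝ} (K : ℝ) (hε : ε < 1) (hR : 1 < R) :
    Integrable (fun x => radialMajorant ε R K |x|) := by
  refine integrable_comp_abs_of_integrableOn_Ioi ?_
  have hcover : Ioi 0 ⊆ (Ioo 0 ε ∪ Icc ε R) ∪ Ioi R := by
    intro r hr
    rcases lt_or_ge r ε with h | h
    · exact Or.inl (Or.inl ⟨hr, h⟩)
    rcases le_or_gt r R with h' | h'
    · exact Or.inl (Or.inr ⟨h, h'⟩)
    · exact Or.inr h'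
  refine IntegrableOn.mono_set ?_ hcover
  refine ((IntegrableOn.union ?_ ?_).union ?_)
  · refine IntegrableOn.congr_fun (((integrableOn_Ioc_inv_mul_log_sq hε).mono_set
      Ioo_subset_Ioc_self).const_mul 4) (fun r hr => ?_) measurableSet_Ioo
    simp [radialMajorant, hr.2.not_ge]
  · exact (integrableOn_const (C := K) measure_Icc_lt_top.ne).congr_fun
      (fun r hr => by simp [radialMajorant, hr]) measurableSet_Icc
  · refine IntegrableOn.congr_fun ((integrableOn_Ioi_inv_mul_log_sq hR).const_mul 4)
      (fun r hr => ?_) measurableSet_Ioi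
    simp [radialMajorant, (mem_Ioi.1 hr).not_ge]

theorem inv_norm_log_sub_log_sq_mul_norm_le_radialMajorant {l z : ℂ} {ε : ℝ} (hl : l ≠ 0)
    (hε : 0 < ε) (hεl : ε < l.im) (hz : z.re ≠ 0) (hzε : z.im ≤ ε)
    (hsmall : |z.re| < ε → ‖z‖ < Real.exp (-2 * max 1 ‖Complex.log l‖)) :
    (‖Complex.log z - Complex.log l‖ ^ 2 * ‖z‖)⁻¹
      ≤ radialMajorant ε (Real.exp (2 * max 1 ‖Complex.log l‖))
          (min 1 ((l.im - ε) / (2 * ‖l‖)) ^ 2 * ε)⁻¹ |z.re| := by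
  set M := max 1 ‖Complex.log l‖
  have hM1 : 1 ≤ M := le_max_left _ _
  have hMl : ‖Complex.log l‖ ≤ M := le_max_right _ _
  have hr : 0 < |z.re| := abs_pos.2 hz
  have hrz : |z.re| ≤ ‖z‖ := abs_re_le_norm z
  have hz0 : 0 < ‖z‖ := hr.trans_le hrz
  unfold radialMajorant
  split_ifs with hmid
  · exact inv_norm_log_sub_log_sq_mul_norm_le_of_im_le hl hzε hεl hε (hmid.1.trans hrz)
  have hout : |z.re| < ε ∨ Real.exp (2 * M) < |z.re| := by
    by_contra! h
    exact hmid ⟨h.1, h.2⟩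
  rcases hout with hsm | hlarge
  · have hρ := hsmall hsm
    have hlog : Real.log ‖z‖ < -2 * M := (Real.log_lt_iff_lt_exp hz0).2 hρ
    have hρ2 : ‖z‖ ≤ Real.exp (-2) := hρ.le.trans (Real.exp_le_exp.2 (by linarith))
    refine (inv_norm_log_sub_log_sq_mul_norm_le ?_).trans ?_
    · rw [abs_of_neg (by linarith)]
      linarith
    gcongr 4 * ?_
    exact antitoneOn_inv_mul_log_sq_Ioc ⟨hr, hrz.trans hρ2⟩ ⟨hz0, hρ2⟩ hrz
  · have hlog : 2 * M < Real.log ‖z‖ := (Real.lt_log_iff_exp_lt hz0).2 (hlarge.trans_le hrz)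
    have hr1 : 1 < |z.re| := (Real.one_lt_exp_iff.2 (by linarith)).trans hlarge
    refine (inv_norm_log_sub_log_sq_mul_norm_le ?_).trans ?_
    · rw [abs_of_pos (by linarith)]
      linarith
    gcongr 4 * ?_
    exact antitoneOn_inv_mul_log_sq_Ioi hr1 (hr1.trans_le hrz) hrz

/-- for fixed `λ ∈ ℂ⁺` and sufficiently small `ε > 0` (so that
`|ξ + iη| < exp(-2 max{1, |log λ|})` for `|ξ| < ε`, `η ∈ [0, ε]`, and `ε < Im λ`),
the integrals `∫_ℝ |log(ξ + iη) - log λ|⁻² |ξ + iη|⁻¹ dξ` are bounded uniformly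
in `η ∈ [0, ε]`. -/
theorem stmt7 (l : ℂ) (hl : 0 < l.im) (ε : ℝ) (hε : 0 < ε) (hεim : ε < l.im)
    (hsmall : ∀ ξ η : ℝ, |ξ| < ε → η ∈ Set.Icc 0 ε →
      ‖(ξ : ℂ) + η * Complex.I‖
        < Real.exp (-2 * max 1 ‖Complex.log l‖)) :
    ∃ C : ℝ, ∀ η ∈ Set.Icc (0:ℝ) ε,
      ∫⁻ ξ : ℝ, ENNReal.ofReal
          ((‖Complex.log ((ξ : ℂ) + η * Complex.I) - Complex.log l‖ ^ 2
            * ‖(ξ : ℂ) + η * Complex.I‖)⁻¹)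
        ≤ ENNReal.ofReal C := by
  set M := max 1 ‖Complex.log l‖
  have hM1 : 1 ≤ M := le_max_left _ _
  have hl0 : l ≠ 0 := by rintro rfl; simp at hl
  have hεM : ε ≤ Real.exp (-2 * M) := by
    by_contra! h
    have := hsmall (Real.exp (-2 * M)) 0 (by rwa [abs_of_pos (Real.exp_pos _)]) ⟨le_rfl, hε.le⟩
    rw [Complex.ofReal_zero, zero_mul, add_zero, Complex.norm_real,
      Real.norm_of_nonneg (Real.exp_pos _).le] at this
    exact this.false
  have hε1 : ε < 1 := hεM.trans_lt (Real.exp_lt_one_iff.2 (by linarith))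
  set K := (min 1 ((l.im - ε) / (2 * ‖l‖)) ^ 2 * ε)⁻¹
  have hint := integrable_radialMajorant_comp_abs K hε1
    (Real.one_lt_exp_iff.2 (by linarith) : 1 < Real.exp (2 * M))
  refine ⟨∫ ξ, radialMajorant ε (Real.exp (2 * M)) K |ξ|, fun η hη => ?_⟩
  rw [ofReal_integral_eq_lintegral_ofReal hint
    (ae_of_all _ fun ξ => radialMajorant_nonneg (by positivity) (abs_nonneg ξ))]
  refine lintegral_mono_ae ?_
  filter_upwards [show ∀ᵐ ξ : ℝ, ξ ≠ 0 by simp [ae_iff]] with ξ hξ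
  have hre : ((ξ : ℂ) + η * I).re = ξ := by simp
  have hbound := inv_norm_log_sub_log_sq_mul_norm_le_radialMajorant (z := ξ + η * I) hl0 hε hεim
    (by rwa [hre]) (by simpa using hη.2) (fun h => hsmall ξ η (by rwa [hre] at h) hη)
  rw [hre] at hbound
  exact ENNReal.ofReal_le_ofReal hbound
end

section
/- Let X be a complex Hilbert space, φ ∈ (0, π], and let F ∈ H⁰(K^φ; X) be a function in the Hardy class of the double-napped cone K^φ = {e^{-iψ}t : t ∈ ℝ∖{0}, 0 < ψ < φ} (analytic with uniformly bounded L² norms on the lines e^{-iψ}ℝ, 0 < ψ < φ) that vanishes identically on the upper nappe K^{φ,+} = {z ∈ K^φ : Im z > 0}. Then there exists a single analytic function ℱ : ⋃_{0<ψ<φ} e^{iψ}ℂ⁻ → X such that for every ψ ∈ (0, φ), the restriction of ℱ to the line e^{iψ}ℝ equals (almost everywhere) the inverse Fourier-Laplace transform along e^{-iψ}ℝ of the restriction of F to e^{-iψ}ℝ: ℱ(λ) = (1/√(2π)) ∫_{e^{-iψ}ℝ⁺} e^{-iλz} F(z) dz. -/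
/-!
Along the ray `z = t e^{-iψ}` one has `|e^{-ilz}| = e^{t Im(e^{-iψ} l)}`, so for `l` in the
half-plane `e^{iψ}ℂ⁻` the Fourier–Laplace integrand is an `L²` weight times the `L²` function
`F` restricted to the ray: Cauchy–Schwarz gives absolute convergence, and dominated
differentiation gives holomorphy in `l`. Two such transforms agree wherever both are defined:
since `φ ≤ π`, the half-plane condition also holds for every intermediate angle, and the
substitution `z = e^w` turns the sector between the two rays into a horizontal strip, on which
Cauchy's theorem for rectangles, together with a uniform `L¹` bound on the horizontal lines, moves
the line of integration. Hence the transforms glue to one holomorphic function.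
-/

open Complex MeasureTheory Set Filter
open scoped Topology ENNReal

/-- The double-napped cone `K^φ = {e^{-iψ}t : t ∈ ℝ∖{0}, 0 < ψ < φ}`. -/
def doubleConeDown (φ : ℝ) : Set ℂ :=
  {z : ℂ | ∃ t : ℝ, t ≠ 0 ∧ ∃ ψ ∈ Set.Ioo 0 φ, z = (t : ℂ) * Complex.exp (-Complex.I * ψ)}

noncomputable def rayDir (ψ : ℝ) : ℂ := cexp (-I * ψ)

lemma norm_rayDir (ψ : ℝ) : ‖rayDir ψ‖ = 1 := by
  simp [rayDir, norm_exp]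

lemma im_rayDir_mul (ψ : ℝ) (l : ℂ) :
    (rayDir ψ * l).im = Real.cos ψ * l.im - Real.sin ψ * l.re := by
  simp only [rayDir, neg_mul, mul_im, exp_re, neg_re, mul_re, I_re, ofReal_re, zero_mul, I_im,
    ofReal_im, mul_zero, sub_self, neg_zero, Real.exp_zero, neg_im, one_mul, zero_add, Real.cos_neg,
    exp_im, Real.sin_neg, mul_neg]
  ring

lemma im_rayDir_mul_le_max {ψ₁ ψ ψ₂ : ℝ} (l : ℂ) (h₁ : ψ₁ ≤ ψ) (h₂ : ψ ≤ ψ₂)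
    (hπ : ψ₂ - ψ₁ < Real.pi) (hneg : max (rayDir ψ₁ * l).im (rayDir ψ₂ * l).im ≤ 0) :
    (rayDir ψ * l).im ≤ max (rayDir ψ₁ * l).im (rayDir ψ₂ * l).im := by
  rcases h₁.eq_or_lt with rfl | h₁
  · exact le_max_left _ _
  set M := max (rayDir ψ₁ * l).im (rayDir ψ₂ * l).im
  have hsin₁ : 0 ≤ Real.sin (ψ₂ - ψ) :=
    Real.sin_nonneg_of_nonneg_of_le_pi (by linarith) (by linarith)
  have hsin₂ : 0 ≤ Real.sin (ψ - ψ₁) :=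
    Real.sin_nonneg_of_nonneg_of_le_pi (by linarith) (by linarith)
  have hsin : 0 < Real.sin (ψ₂ - ψ₁) := Real.sin_pos_of_pos_of_lt_pi (by linarith) hπ
  -- `ψ ↦ (rayDir ψ * l).im` is a sinusoid, hence a positive combination of its values at `ψ₁, ψ₂`
  have hcomb : Real.sin (ψ₂ - ψ₁) * (rayDir ψ * l).im =
      Real.sin (ψ₂ - ψ) * (rayDir ψ₁ * l).im + Real.sin (ψ - ψ₁) * (rayDir ψ₂ * l).im := by
    simp only [im_rayDir_mul, Real.sin_sub]
    ring
  have hsub : Real.sin (ψ₂ - ψ₁) ≤ Real.sin (ψ₂ - ψ) + Real.sin (ψ - ψ₁) := by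
    rw [show ψ₂ - ψ₁ = (ψ₂ - ψ) + (ψ - ψ₁) by ring, Real.sin_add]
    nlinarith [Real.cos_le_one (ψ₂ - ψ), Real.cos_le_one (ψ - ψ₁)]
  refine le_of_mul_le_mul_left ?_ hsin
  calc Real.sin (ψ₂ - ψ₁) * (rayDir ψ * l).im
      ≤ Real.sin (ψ₂ - ψ) * M + Real.sin (ψ - ψ₁) * M := by
        rw [hcomb]
        gcongr
        exacts [le_max_left _ _, le_max_right _ _]
    _ ≤ Real.sin (ψ₂ - ψ₁) * M := by nlinarith

lemma continuousOn_comp_ray {X : Type*} [TopologicalSpace X] {φ ψ : ℝ} {F : ℂ → X}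
    (hF : ContinuousOn F (doubleConeDown φ)) (hψ : ψ ∈ Ioo 0 φ) :
    ContinuousOn (fun t : ℝ => F (t * rayDir ψ)) (Ioi 0) :=
  hF.comp (by fun_prop) fun t ht => ⟨t, ht.ne', ψ, hψ, rfl⟩

lemma memLp_two_pow_mul_exp_Ioi (k : ℕ) {m : ℝ} (hm : m < 0) :
    MemLp (fun t : ℝ => t ^ k * Real.exp (m * t)) 2 (volume.restrict (Ioi 0)) := by
  refine (memLp_two_iff_integrable_sq (by fun_prop)).2 <|
    (integrableOn_rpow_mul_exp_neg_mul_rpow (s := 2 * k) (p := 1) (b := -2 * m)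
      (by linarith [(Nat.cast_nonneg k : (0 : ℝ) ≤ k)]) one_pos (by linarith)).congr_fun
      (fun t _ => ?_) measurableSet_Ioi
  dsimp only
  rw [Real.rpow_one, mul_pow, ← pow_mul, ← Real.exp_nat_mul, ← Real.rpow_natCast]
  push_cast
  ring_nf

lemma eLpNorm_two_le_of_lintegral_sq_le {α E : Type*} [MeasurableSpace α] {μ : Measure α}
    [NormedAddCommGroup E] {f : α → E} {c : ℝ≥0∞}
    (h : ∫⁻ x, (‖f x‖₊ : ℝ≥0∞) ^ 2 ∂μ ≤ c) : eLpNorm f 2 μ ≤ c ^ (1 / 2 : ℝ) := by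
  rw [eLpNorm_eq_lintegral_rpow_enorm_toReal two_ne_zero ENNReal.ofNat_ne_top]
  simp only [ENNReal.toReal_ofNat, ENNReal.rpow_two]
  gcongr
  exact h

section RayIntegrand

variable {X : Type*} [NormedAddCommGroup X] [NormedSpace ℂ X]

/-- The integrand `e^{-ilz} F(z) dz/dt` of the Fourier–Laplace transform along `z = t e^{-iψ}`. -/
noncomputable def rayIntegrand (F : ℂ → X) (ψ : ℝ) (l : ℂ) (t : ℝ) : X :=
  (cexp (-I * l * (t * rayDir ψ)) * rayDir ψ) • F (t * rayDir ψ)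

lemma norm_cexp_mul_ray (ψ : ℝ) (l : ℂ) (t : ℝ) :
    ‖cexp (-I * l * (t * rayDir ψ))‖ = Real.exp ((rayDir ψ * l).im * t) := by
  rw [norm_exp]
  congr 1
  simp only [neg_mul, neg_re, mul_re, I_re, zero_mul, I_im, one_mul, zero_sub, ofReal_re, ofReal_im,
    sub_zero, mul_im, zero_add, add_zero, neg_sub, sub_neg_eq_add]
  ring

lemma norm_rayIntegrand (F : ℂ → X) (ψ : ℝ) (l : ℂ) (t : ℝ) :
    ‖rayIntegrand F ψ l t‖ = Real.exp ((rayDir ψ * l).im * t) * ‖F (t * rayDir ψ)‖ := by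
  rw [rayIntegrand, norm_smul, norm_mul, norm_rayDir, mul_one, norm_cexp_mul_ray]

lemma aestronglyMeasurable_rayIntegrand {F : ℂ → X} {ψ : ℝ} {μ : Measure ℝ}
    (hF : AEStronglyMeasurable (fun t : ℝ => F (t * rayDir ψ)) μ) (l : ℂ) :
    AEStronglyMeasurable (rayIntegrand F ψ l) μ :=
  (Continuous.aestronglyMeasurable (by fun_prop)).smul hF

lemma lintegral_enorm_rayIntegrand_le {F : ℂ → X} {ψ m : ℝ} {l : ℂ}
    (hF : AEStronglyMeasurable (fun t : ℝ => F (t * rayDir ψ)) (volume.restrict (Ioi 0)))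
    (hm : (rayDir ψ * l).im ≤ m) :
    ∫⁻ t in Ioi 0, ‖rayIntegrand F ψ l t‖ₑ ≤
      eLpNorm (fun t : ℝ => Real.exp (m * t)) 2 (volume.restrict (Ioi 0)) *
        eLpNorm (fun t : ℝ => F (t * rayDir ψ)) 2 (volume.restrict (Ioi 0)) := by
  calc ∫⁻ t in Ioi 0, ‖rayIntegrand F ψ l t‖ₑ
      ≤ ∫⁻ t in Ioi 0,
          ‖((fun t : ℝ => Real.exp (m * t)) • fun t : ℝ => F (t * rayDir ψ)) t‖ₑ := by
        refine setLIntegral_mono' measurableSet_Ioi fun t (ht : 0 < t) => ?_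
        rw [enorm_le_iff_norm_le, norm_rayIntegrand, Pi.smul_apply', norm_smul,
          Real.norm_of_nonneg (Real.exp_pos _).le]
        gcongr
    _ = eLpNorm ((fun t : ℝ => Real.exp (m * t)) • fun t : ℝ => F (t * rayDir ψ)) 1
          (volume.restrict (Ioi 0)) := eLpNorm_one_eq_lintegral_enorm.symm
    _ ≤ _ := eLpNorm_smul_le_mul_eLpNorm hF (by fun_prop)

lemma integrableOn_rayIntegrand {F : ℂ → X} {ψ : ℝ} {l : ℂ}
    (hF : MemLp (fun t : ℝ => F (t * rayDir ψ)) 2 (volume.restrict (Ioi 0)))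
    (hl : (rayDir ψ * l).im < 0) : IntegrableOn (rayIntegrand F ψ l) (Ioi 0) := by
  have hexp : eLpNorm (fun t : ℝ => Real.exp ((rayDir ψ * l).im * t)) 2
      (volume.restrict (Ioi 0)) < ∞ := by
    simpa using (memLp_two_pow_mul_exp_Ioi 0 hl).eLpNorm_lt_top
  exact ⟨aestronglyMeasurable_rayIntegrand hF.1 l,
    (lintegral_enorm_rayIntegrand_le hF.1 le_rfl).trans_lt
      (ENNReal.mul_lt_top hexp hF.eLpNorm_lt_top)⟩

open Metric in
lemma differentiableAt_integral_rayIntegrand [CompleteSpace X] {F : ℂ → X} {ψ : ℝ} {l₀ : ℂ}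
    (hF : MemLp (fun t : ℝ => F (t * rayDir ψ)) 2 (volume.restrict (Ioi 0)))
    (hl₀ : (rayDir ψ * l₀).im < 0) :
    DifferentiableAt ℂ (fun l => ∫ t in Ioi 0, rayIntegrand F ψ l t) l₀ := by
  set m := (rayDir ψ * l₀).im / 2
  have hm : m < 0 := div_neg_of_neg_of_pos hl₀ two_pos
  have him_le : ∀ l ∈ ball l₀ (-m), (rayDir ψ * l).im ≤ m := fun l hl => by
    have h : (rayDir ψ * (l - l₀)).im ≤ ‖l - l₀‖ := by
      simpa [norm_rayDir] using (abs_le.1 (abs_im_le_norm (rayDir ψ * (l - l₀)))).2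
    have : (rayDir ψ * l).im = 2 * m + (rayDir ψ * (l - l₀)).im := by
      rw [mul_div_cancel₀ _ two_ne_zero, ← add_im, ← mul_add, add_sub_cancel]
    linarith [mem_ball_iff_norm.1 hl]
  set F' : ℂ → ℝ → X := fun l t =>
    (cexp (-I * l * (t * rayDir ψ)) * (-I * (t * rayDir ψ)) * rayDir ψ) • F (t * rayDir ψ)
  have hderiv : ∀ l t, HasDerivAt (fun l => rayIntegrand F ψ l t) (F' l t) l := fun l t => by
    simpa only [rayIntegrand, id, mul_one] using ((((hasDerivAt_id l).const_mul (-I)).mul_const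
      ((t : ℂ) * rayDir ψ)).cexp.mul_const (rayDir ψ)).smul_const (F (t * rayDir ψ))
  have hnorm_F' : ∀ l, ∀ t > (0 : ℝ),
      ‖F' l t‖ = t * Real.exp ((rayDir ψ * l).im * t) * ‖F (t * rayDir ψ)‖ := fun l t ht => by
    simp only [F', norm_smul, norm_mul, norm_cexp_mul_ray, norm_neg, norm_I, norm_real,
      norm_rayDir, Real.norm_of_nonneg ht.le]
    ring
  have hbound : ∀ᵐ t ∂volume.restrict (Ioi 0), ∀ l ∈ ball l₀ (-m),
      ‖F' l t‖ ≤ t ^ 1 * Real.exp (m * t) * ‖F (t * rayDir ψ)‖ := by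
    refine (ae_restrict_iff' measurableSet_Ioi).2 (.of_forall fun t (ht : 0 < t) l hl => ?_)
    rw [hnorm_F' l t ht, pow_one]
    gcongr
    exact him_le l hl
  exact (hasDerivAt_integral_of_dominated_loc_of_deriv_le (F := fun l => rayIntegrand F ψ l)
    (ball_mem_nhds l₀ (by linarith)) (.of_forall (aestronglyMeasurable_rayIntegrand hF.1))
    (integrableOn_rayIntegrand hF hl₀)
    ((Continuous.aestronglyMeasurable (by fun_prop)).smul hF.1) hbound
    ((memLp_two_pow_mul_exp_Ioi 1 hm).integrable_mul hF.norm)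
    (.of_forall fun t l _ => hderiv l t)).2.differentiableAt

end RayIntegrand

lemma MeasureTheory.Integrable.exists_tendsto_atTop_tendsto_zero {E : Type*}
    [NormedAddCommGroup E] {V : ℝ → E} (hV : Integrable V) :
    ∃ u : ℕ → ℝ, Tendsto u atTop atTop ∧ Tendsto (fun n => V (u n)) atTop (𝓝 0) := by
  have hsmall : ∀ n : ℕ, ∃ u, (n : ℝ) < u ∧ ‖V u‖ < 1 / (n + 1) := by
    intro n
    by_contra! hlarge
    -- otherwise the positive constant `1 / (n + 1)` would be integrable on `(n, ∞)`
    have hconst : IntegrableOn (fun _ => (1 : ℝ) / (n + 1)) (Ioi (n : ℝ)) :=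
      hV.norm.integrableOn.mono' aestronglyMeasurable_const
        ((ae_restrict_iff' measurableSet_Ioi).2 (.of_forall fun u hu => by
          simpa [abs_of_pos (Nat.cast_add_one_pos (α := ℝ) n)] using hlarge u hu))
    rw [integrableOn_const_iff] at hconst
    rcases hconst with h | h
    · exact (by positivity : (0 : ℝ) < 1 / (n + 1)).ne' (enorm_eq_zero.1 h)
    · simp at h
  choose u hu hVu using hsmall
  exact ⟨u, tendsto_atTop_mono (fun n => (hu n).le) tendsto_natCast_atTop_atTop,
    squeeze_zero_norm (fun n => (hVu n).le) tendsto_one_div_add_atTop_nhds_zero_nat⟩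

section Strip

variable {E : Type*} [NormedAddCommGroup E]

lemma integrable_prod_of_lintegral_horizontal_le {f : ℂ → E} {a b : ℝ} {K : ℝ≥0∞}
    (hf : ContinuousOn f (im ⁻¹' Icc a b))
    (hK : ∀ y ∈ Icc a b, ∫⁻ x : ℝ, ‖f (x + y * I)‖ₑ ≤ K) (hK_top : K ≠ ∞) :
    Integrable (fun p : ℝ × ℝ => f (p.1 + p.2 * I)) (volume.prod (volume.restrict (Ioc a b))) := by
  have hmeas : AEStronglyMeasurable (fun p : ℝ × ℝ => f (p.1 + p.2 * I))
      (volume.prod (volume.restrict (Ioc a b))) := by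
    rw [← Measure.restrict_univ (μ := volume), Measure.prod_restrict]
    refine ContinuousOn.aestronglyMeasurable (hf.comp (by fun_prop) ?_)
      (MeasurableSet.univ.prod measurableSet_Ioc)
    rintro ⟨x, y⟩ ⟨-, hy⟩
    simpa using Ioc_subset_Icc_self hy
  refine ⟨hmeas, ?_⟩
  show ∫⁻ p : ℝ × ℝ, ‖f (p.1 + p.2 * I)‖ₑ ∂(volume.prod (volume.restrict (Ioc a b))) < ∞
  calc ∫⁻ p : ℝ × ℝ, ‖f (p.1 + p.2 * I)‖ₑ ∂(volume.prod (volume.restrict (Ioc a b)))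
      = ∫⁻ y in Ioc a b, ∫⁻ x : ℝ, ‖f (x + y * I)‖ₑ := lintegral_prod_symm _ hmeas.enorm
    _ ≤ ∫⁻ _ in Ioc a b, K := setLIntegral_mono' measurableSet_Ioc fun y hy =>
        hK y (Ioc_subset_Icc_self hy)
    _ < ∞ := by
        simpa using ENNReal.mul_lt_top hK_top.lt_top
          (measure_Ioc_lt_top (μ := volume) (a := a) (b := b))

theorem integral_add_mul_I_eq_of_differentiableOn_strip [NormedSpace ℂ E] [CompleteSpace E]
    {f : ℂ → E} {a b : ℝ} {K : ℝ≥0∞} (hab : a ≤ b) (hf : DifferentiableOn ℂ f (im ⁻¹' Icc a b))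
    (hK : ∀ y ∈ Icc a b, ∫⁻ x : ℝ, ‖f (x + y * I)‖ₑ ≤ K) (hK_top : K ≠ ∞) :
    ∫ x : ℝ, f (x + a * I) = ∫ x : ℝ, f (x + b * I) := by
  have hline : ∀ y ∈ Icc a b, Integrable fun x : ℝ => f (x + y * I) := fun y hy =>
    ⟨(hf.continuousOn.comp_continuous (by fun_prop) fun x => by simpa using hy)
      |>.aestronglyMeasurable, (hK y hy).trans_lt hK_top.lt_top⟩
  set V : ℝ → E := fun u => ∫ y in a..b, f (u + y * I)
  -- the vertical sides are integrable in their abscissa, so they vanish along suitable sequences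
  have hV : Integrable V := by
    simpa only [V, intervalIntegral.integral_of_le hab] using
      (integrable_prod_of_lintegral_horizontal_le hf.continuousOn hK hK_top).integral_prod_left
  obtain ⟨uT, huT, hVT⟩ := hV.exists_tendsto_atTop_tendsto_zero
  obtain ⟨uB, huB, hVB⟩ := hV.comp_neg.exists_tendsto_atTop_tendsto_zero
  have hrect : ∀ n, (∫ x in -uB n..uT n, f (x + a * I)) - (∫ x in -uB n..uT n, f (x + b * I)) +
      I • V (uT n) - I • V (-uB n) = 0 := fun n => by
    refine integral_boundary_rect_eq_zero_of_differentiableOn f ⟨-uB n, a⟩ ⟨uT n, b⟩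
      (hf.mono fun z hz => ?_)
    simpa [uIcc_of_le hab] using (mem_reProdIm.1 hz).2
  have hlim := (((intervalIntegral_tendsto_integral (hline a ⟨le_rfl, hab⟩)
    (tendsto_neg_atTop_atBot.comp huB) huT).sub (intervalIntegral_tendsto_integral
      (hline b ⟨hab, le_rfl⟩) (tendsto_neg_atTop_atBot.comp huB) huT)).add
        (hVT.const_smul I)).sub (hVB.const_smul I)
  simp only [smul_zero, add_zero, sub_zero] at hlim
  exact sub_eq_zero.1
    (tendsto_nhds_unique hlim (tendsto_const_nhds.congr fun n => (hrect n).symm))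

end Strip

lemma integral_Ioi_zero_eq_integral_exp_smul {E : Type*} [NormedAddCommGroup E]
    [NormedSpace ℝ E] (g : ℝ → E) :
    ∫ t in Ioi 0, g t = ∫ x : ℝ, Real.exp x • g (Real.exp x) := by
  simpa [Real.range_exp, abs_of_pos (Real.exp_pos _)] using
    integral_image_eq_integral_abs_deriv_smul MeasurableSet.univ
      (fun x _ => (Real.hasDerivAt_exp x).hasDerivWithinAt) Real.exp_injective.injOn g

lemma lintegral_Ioi_zero_eq_lintegral_exp_mul (g : ℝ → ℝ≥0∞) :
    ∫⁻ t in Ioi 0, g t = ∫⁻ x : ℝ, ENNReal.ofReal (Real.exp x) * g (Real.exp x) := by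
  simpa [Real.range_exp, abs_of_pos (Real.exp_pos _)] using
    lintegral_image_eq_lintegral_abs_deriv_mul MeasurableSet.univ
      (fun x _ => (Real.hasDerivAt_exp x).hasDerivWithinAt) Real.exp_injective.injOn g

lemma cexp_mem_doubleConeDown {φ : ℝ} {w : ℂ} (hw : w.im ∈ Ioo (-φ) 0) :
    cexp w ∈ doubleConeDown φ := by
  refine ⟨Real.exp w.re, (Real.exp_pos _).ne', -w.im,
    ⟨by linarith [hw.2], by linarith [hw.1]⟩, ?_⟩
  conv_lhs => rw [← re_add_im w]
  rw [exp_add, ofReal_exp]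
  congr 1
  push_cast
  ring_nf

section Consistency

variable {X : Type*} [NormedAddCommGroup X] [NormedSpace ℂ X]

/-- The pullback of `e^{-ilz} F(z) dz` under `z = e^w`, which maps the strip `-φ < Im w < 0`
into the cone. -/
noncomputable def stripIntegrand (F : ℂ → X) (l w : ℂ) : X :=
  (cexp (-I * l * cexp w) * cexp w) • F (cexp w)

lemma stripIntegrand_add_mul_I (F : ℂ → X) (l : ℂ) (x y : ℝ) :
    stripIntegrand F l (x + y * I) = Real.exp x • rayIntegrand F (-y) l (Real.exp x) := by
  have hexp : cexp (x + y * I) = Real.exp x * rayDir (-y) := by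
    rw [rayDir, exp_add, ofReal_exp]
    push_cast
    ring_nf
  rw [stripIntegrand, rayIntegrand, hexp, ← smul_assoc, real_smul]
  ring_nf

lemma differentiableOn_stripIntegrand {φ : ℝ} {F : ℂ → X}
    (hF : DifferentiableOn ℂ F (doubleConeDown φ)) (l : ℂ) :
    DifferentiableOn ℂ (stripIntegrand F l) (im ⁻¹' Ioo (-φ) 0) :=
  ((differentiable_exp.const_mul _).cexp.mul differentiable_exp).differentiableOn.smul
    (hF.comp differentiable_exp.differentiableOn fun _ hw => cexp_mem_doubleConeDown hw)

theorem integral_rayIntegrand_eq [CompleteSpace X] {φ : ℝ} (hφ : φ ≤ Real.pi) {F : ℂ → X}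
    (hF : DifferentiableOn ℂ F (doubleConeDown φ)) {c : ℝ≥0∞} (hc : c ≠ ∞)
    (hL2 : ∀ ψ ∈ Ioo 0 φ,
      eLpNorm (fun t : ℝ => F (t * rayDir ψ)) 2 (volume.restrict (Ioi 0)) ≤ c)
    {l : ℂ} {ψ₁ ψ₂ : ℝ} (hψ₁ : ψ₁ ∈ Ioo 0 φ) (hψ₂ : ψ₂ ∈ Ioo 0 φ)
    (hl₁ : (rayDir ψ₁ * l).im < 0) (hl₂ : (rayDir ψ₂ * l).im < 0) :
    ∫ t in Ioi 0, rayIntegrand F ψ₁ l t = ∫ t in Ioi 0, rayIntegrand F ψ₂ l t := by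
  wlog h₁₂ : ψ₁ ≤ ψ₂ generalizing ψ₁ ψ₂
  · exact (this hψ₂ hψ₁ hl₂ hl₁ (le_of_not_ge h₁₂)).symm
  set M := max (rayDir ψ₁ * l).im (rayDir ψ₂ * l).im
  have hM : M < 0 := max_lt hl₁ hl₂
  have hbound : ∀ y ∈ Icc (-ψ₂) (-ψ₁), ∫⁻ x : ℝ, ‖stripIntegrand F l (x + y * I)‖ₑ ≤
      eLpNorm (fun t : ℝ => Real.exp (M * t)) 2 (volume.restrict (Ioi 0)) * c := by
    rintro y ⟨hy₂, hy₁⟩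
    have hψ : -y ∈ Ioo 0 φ := ⟨by linarith [hψ₁.1], by linarith [hψ₂.2]⟩
    have hm : (rayDir (-y) * l).im ≤ M := im_rayDir_mul_le_max l (by linarith) (by linarith)
      (by linarith [hψ₁.1, hψ₂.2]) hM.le
    calc ∫⁻ x : ℝ, ‖stripIntegrand F l (x + y * I)‖ₑ
        = ∫⁻ t in Ioi 0, ‖rayIntegrand F (-y) l t‖ₑ := by
          simp only [lintegral_Ioi_zero_eq_lintegral_exp_mul, stripIntegrand_add_mul_I,
            enorm_smul, Real.enorm_of_nonneg (Real.exp_pos _).le]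
      _ ≤ _ := (lintegral_enorm_rayIntegrand_le ((continuousOn_comp_ray hF.continuousOn
          hψ).aestronglyMeasurable measurableSet_Ioi) hm).trans (mul_le_mul_right (hL2 _ hψ) _)
  have hK_top : eLpNorm (fun t : ℝ => Real.exp (M * t)) 2 (volume.restrict (Ioi 0)) * c ≠ ∞ :=
    ENNReal.mul_ne_top (by simpa using (memLp_two_pow_mul_exp_Ioi 0 hM).eLpNorm_ne_top) hc
  have hstrip := integral_add_mul_I_eq_of_differentiableOn_strip (neg_le_neg h₁₂)
    ((differentiableOn_stripIntegrand hF l).mono fun w ⟨hw₂, hw₁⟩ =>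
      ⟨by linarith [hψ₂.2], by linarith [hψ₁.1]⟩) hbound hK_top
  simpa only [integral_Ioi_zero_eq_integral_exp_smul, stripIntegrand_add_mul_I, neg_neg] using
    hstrip.symm

end Consistency

lemma exists_differentiableOn_of_forall_eqOn {𝕜 E ι : Type*} [NontriviallyNormedField 𝕜]
    [NormedAddCommGroup E] [NormedSpace 𝕜 E] {s : Set ι} {U : ι → Set 𝕜} {f : ι → 𝕜 → E}
    (hU : ∀ i ∈ s, IsOpen (U i)) (hf : ∀ i ∈ s, DifferentiableOn 𝕜 (f i) (U i))
    (hagree : ∀ i ∈ s, ∀ j ∈ s, ∀ z ∈ U i ∩ U j, f i z = f j z) :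
    ∃ g : 𝕜 → E, DifferentiableOn 𝕜 g {z | ∃ i ∈ s, z ∈ U i} ∧
      ∀ i ∈ s, ∀ z ∈ U i, g z = f i z := by
  classical
  let g : 𝕜 → E := fun z => if h : ∃ i ∈ s, z ∈ U i then f h.choose z else 0
  have hg : ∀ i ∈ s, ∀ z ∈ U i, g z = f i z := fun i hi z hz => by
    have h : ∃ i ∈ s, z ∈ U i := ⟨i, hi, hz⟩
    simp only [g, dif_pos h]
    exact hagree _ h.choose_spec.1 i hi z ⟨h.choose_spec.2, hz⟩
  refine ⟨g, fun z ⟨i, hi, hz⟩ => ?_, hg⟩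
  have hnhds : U i ∈ 𝓝 z := (hU i hi).mem_nhds hz
  exact (((hf i hi).differentiableAt hnhds).congr_of_eventuallyEq
    (Filter.eventually_of_mem hnhds (hg i hi))).differentiableWithinAt

theorem stmt18_general {X : Type*} [NormedAddCommGroup X] [InnerProductSpace ℂ X] [CompleteSpace X]
    (φ : ℝ) (hφπ : φ ≤ Real.pi) (F : ℂ → X)
    (hanal : DifferentiableOn ℂ F (doubleConeDown φ))
    (hHardy : ∃ C : ℝ, ∀ ψ ∈ Set.Ioo 0 φ,
      ∫⁻ t : ℝ, (‖F ((t : ℂ) * Complex.exp (-Complex.I * ψ))‖₊ : ℝ≥0∞) ^ 2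
        ≤ ENNReal.ofReal C) :
    ∃ ℱ : ℂ → X,
      DifferentiableOn ℂ ℱ
        {l : ℂ | ∃ ψ ∈ Set.Ioo 0 φ, (Complex.exp (-Complex.I * ψ) * l).im < 0} ∧
      ∀ ψ ∈ Set.Ioo 0 φ, ∀ l : ℂ, (Complex.exp (-Complex.I * ψ) * l).im < 0 →
        MeasureTheory.IntegrableOn (fun t : ℝ =>
          (Complex.exp (-Complex.I * l * ((t : ℂ) * Complex.exp (-Complex.I * ψ)))
            * Complex.exp (-Complex.I * ψ)) • F ((t : ℂ) * Complex.exp (-Complex.I * ψ)))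
          (Set.Ioi 0) ∧
        ℱ l = (Real.sqrt (2 * Real.pi))⁻¹ •
          ∫ t : ℝ in Set.Ioi 0,
            (Complex.exp (-Complex.I * l * ((t : ℂ) * Complex.exp (-Complex.I * ψ)))
              * Complex.exp (-Complex.I * ψ)) • F ((t : ℂ) * Complex.exp (-Complex.I * ψ)) := by
  obtain ⟨C, hC⟩ := hHardy
  have hL2 : ∀ ψ ∈ Ioo 0 φ, eLpNorm (fun t : ℝ => F (t * rayDir ψ)) 2
      (volume.restrict (Ioi 0)) ≤ ENNReal.ofReal C ^ (1 / 2 : ℝ) := fun ψ hψ =>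
    (eLpNorm_mono_measure _ Measure.restrict_le_self).trans
      (eLpNorm_two_le_of_lintegral_sq_le (hC ψ hψ))
  have hc : ENNReal.ofReal C ^ (1 / 2 : ℝ) ≠ ∞ :=
    ENNReal.rpow_ne_top_of_nonneg (by norm_num) ENNReal.ofReal_ne_top
  have hmemLp : ∀ ψ ∈ Ioo 0 φ, MemLp (fun t : ℝ => F (t * rayDir ψ)) 2
      (volume.restrict (Ioi 0)) := fun ψ hψ =>
    ⟨(continuousOn_comp_ray hanal.continuousOn hψ).aestronglyMeasurable measurableSet_Ioi,
      (hL2 ψ hψ).trans_lt hc.lt_top⟩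
  obtain ⟨ℱ, hℱ, hℱ_eq⟩ := exists_differentiableOn_of_forall_eqOn
    (U := fun ψ => {l : ℂ | (rayDir ψ * l).im < 0})
    (f := fun ψ l => (Real.sqrt (2 * Real.pi))⁻¹ • ∫ t in Ioi 0, rayIntegrand F ψ l t)
    (fun _ _ => isOpen_lt (by fun_prop) continuous_const)
    (fun ψ hψ l hl => ((differentiableAt_integral_rayIntegrand (hmemLp ψ hψ) hl).const_smul
      _).differentiableWithinAt)
    (fun ψ₁ hψ₁ ψ₂ hψ₂ l hl =>
      congrArg _ (integral_rayIntegrand_eq hφπ hanal hc hL2 hψ₁ hψ₂ hl.1 hl.2))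
  exact ⟨ℱ, hℱ, fun ψ hψ l hl =>
    ⟨integrableOn_rayIntegrand (hmemLp ψ hψ) hl, hℱ_eq ψ hψ l hl⟩⟩

/-- gluing lemma, Lemma l4(i): if `F ∈ H⁰(K^φ; X)` (analytic on the
cone with uniformly bounded `L²` norms on the lines `e^{-iψ}ℝ`) vanishes on the
upper nappe, then there is one analytic function `ℱ` on `⋃_{0<ψ<φ} e^{iψ}ℂ⁻` which
on each rotated half-plane `e^{iψ}ℂ⁻` is given by the absolutely convergent inverse
Fourier–Laplace integral of the restriction of `F` to the ray `e^{-iψ}ℝ⁺`. -/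
theorem stmt18 {X : Type*} [NormedAddCommGroup X] [InnerProductSpace ℂ X] [CompleteSpace X]
    (φ : ℝ) (hφ0 : 0 < φ) (hφπ : φ ≤ Real.pi) (F : ℂ → X)
    (hanal : DifferentiableOn ℂ F (doubleConeDown φ))
    (hHardy : ∃ C : ℝ, ∀ ψ ∈ Set.Ioo 0 φ,
      ∫⁻ t : ℝ, (‖F ((t : ℂ) * Complex.exp (-Complex.I * ψ))‖₊ : ℝ≥0∞) ^ 2
        ≤ ENNReal.ofReal C)
    (hvanish : ∀ z ∈ doubleConeDown φ, 0 < z.im → F z = 0) :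
    ∃ ℱ : ℂ → X,
      DifferentiableOn ℂ ℱ
        {l : ℂ | ∃ ψ ∈ Set.Ioo 0 φ, (Complex.exp (-Complex.I * ψ) * l).im < 0} ∧
      ∀ ψ ∈ Set.Ioo 0 φ, ∀ l : ℂ, (Complex.exp (-Complex.I * ψ) * l).im < 0 →
        MeasureTheory.IntegrableOn (fun t : ℝ =>
          (Complex.exp (-Complex.I * l * ((t : ℂ) * Complex.exp (-Complex.I * ψ)))
            * Complex.exp (-Complex.I * ψ)) • F ((t : ℂ) * Complex.exp (-Complex.I * ψ)))
          (Set.Ioi 0) ∧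
        ℱ l = (Real.sqrt (2 * Real.pi))⁻¹ •
          ∫ t : ℝ in Set.Ioi 0,
            (Complex.exp (-Complex.I * l * ((t : ℂ) * Complex.exp (-Complex.I * ψ)))
              * Complex.exp (-Complex.I * ψ)) • F ((t : ℂ) * Complex.exp (-Complex.I * ψ)) :=
  stmt18_general φ hφπ F hanal hHardy
end
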